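/- arXiv:1805.02803 — 11 statements merged into one kernel-verified Lean document; each statement's English description precedes it below -/
import Mathlib

section
/- If X, X_1, X_2, ... are i.i.d. real random variables with E[X^2] < ∞, mean μ, and X is not a.s. equal to μ, then for every 0 < p ≤ 2 the series ∑_{n=1}^∞ E[|S_n/n - μ|^p] diverges, where S_n = X_1 + ... + X_n. -/
/-!
By the central limit theorem, `(Sₙ - nμ)/√n` converges in distribution to a centred Gaussian
`G` with variance `Var X > 0`, so the bounded continuous test function `x ↦ min (x²) 1` gives
`E[min ((Sₙ - nμ)²/n) 1] → E[min (G²) 1] > 0`. Since `min (x²) 1 ≤ |x|^p` for `0 < p ≤ 2`,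
this yields `E|Sₙ/n - μ|^p ≥ c/n` for large `n`, and the harmonic series diverges.
-/

open MeasureTheory ProbabilityTheory Filter Topology BoundedContinuousFunction

lemma MeasureTheory.TendstoInDistribution.tendsto_integral_comp {ι Ω' E : Type*}
    {Ω : ι → Type*} {mΩ : ∀ i, MeasurableSpace (Ω i)} {mΩ' : MeasurableSpace Ω'}
    [TopologicalSpace E] [MeasurableSpace E] [OpensMeasurableSpace E]
    {X : ∀ i, Ω i → E} {l : Filter ι} {Z : Ω' → E} {μ : ∀ i, Measure (Ω i)}
    [∀ i, IsProbabilityMeasure (μ i)] {μ' : Measure Ω'} [IsProbabilityMeasure μ']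
    (h : TendstoInDistribution X l Z μ μ') (f : E →ᵇ ℝ) :
    Tendsto (fun i ↦ ∫ ω, f (X i ω) ∂μ i) l (𝓝 (∫ ω, f (Z ω) ∂μ')) := by
  have := ProbabilityMeasure.tendsto_iff_forall_integral_tendsto.mp h.tendsto f
  simp only [ProbabilityMeasure.coe_mk] at this
  simpa only [integral_map h.aemeasurable_limit f.continuous.aestronglyMeasurable,
    integral_map (h.forall_aemeasurable _) f.continuous.aestronglyMeasurable] using this

lemma min_sq_one_le_abs_rpow {p : ℝ} (hp0 : 0 < p) (hp2 : p ≤ 2) (x : ℝ) :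
    min (x ^ 2) 1 ≤ |x| ^ p := by
  rcases le_total |x| 1 with hx | hx
  · calc min (x ^ 2) 1 ≤ |x| ^ (2 : ℝ) := by rw [Real.rpow_two, sq_abs]; exact min_le_left _ _
      _ ≤ |x| ^ p := Real.rpow_le_rpow_of_exponent_ge' (abs_nonneg x) hx hp0.le hp2
  · exact (min_le_right _ _).trans (Real.one_le_rpow hx hp0.le)

lemma min_sq_one_div_le_abs_div_sqrt_rpow {p n : ℝ} (hp0 : 0 < p) (hp2 : p ≤ 2) (hn : 1 ≤ n)
    (y : ℝ) : min (y ^ 2) 1 / n ≤ |y / √n| ^ p := by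
  have hn0 : 0 < n := by linarith
  calc min (y ^ 2) 1 / n ≤ min ((y / √n) ^ 2) 1 := by
        rw [div_pow, Real.sq_sqrt hn0.le]
        refine le_min ?_ ?_
        · exact div_le_div_of_nonneg_right (min_le_left _ _) hn0.le
        · rw [div_le_one hn0]; exact (min_le_right _ _).trans hn
    _ ≤ |y / √n| ^ p := min_sq_one_le_abs_rpow hp0 hp2 _

lemma integral_min_sq_one_gaussianReal_pos (m : ℝ) {v : NNReal} (hv : v ≠ 0) :
    0 < ∫ x, min (x ^ 2) 1 ∂gaussianReal m v := by
  have := nullSingletonClass_gaussianReal (μ := m) hv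
  rw [integral_pos_iff_support_of_nonneg (fun x ↦ by positivity)]
  · have hsupp : Function.support (fun x : ℝ ↦ min (x ^ 2) 1) = {0}ᶜ := by
      ext x
      rcases eq_or_ne x 0 with rfl | hx
      · simp
      · simpa [hx] using (lt_min (by positivity : 0 < x ^ 2) one_pos).ne'
    rw [hsupp, prob_compl_eq_one_sub (measurableSet_singleton 0), measure_singleton]
    simp
  · exact (integrable_const 1).mono' (by fun_prop) (ae_of_all _ fun x ↦ by
      rw [Real.norm_of_nonneg (by positivity)]
      exact min_le_right _ _)

lemma not_summable_of_eventually_div_succ_le {f : ℕ → ℝ} {c : ℝ} (hc : 0 < c)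
    (hf : ∀ᶠ n in atTop, c / (n + 1) ≤ f n) : ¬Summable f := by
  intro hs
  have hc_div : Summable fun n : ℕ ↦ c / ((n : ℝ) + 1) :=
    Summable.of_norm_bounded_eventually_nat hs (hf.mono fun n hn ↦ by
      rwa [Real.norm_of_nonneg (by positivity)])
  have harmonic : Summable fun n : ℕ ↦ 1 / ((n + 1 : ℕ) : ℝ) := by
    simpa [div_eq_mul_inv, ← mul_assoc, hc.ne'] using hc_div.mul_left c⁻¹
  exact Real.not_summable_one_div_natCast ((summable_nat_add_iff 1).mp harmonic)

section Moments

variable {Ω : Type*} [MeasurableSpace Ω] {P : Measure Ω} [IsProbabilityMeasure P]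

lemma tendsto_integral_min_sq_one_inv_sqrt_mul_sum_sub {X : ℕ → Ω → ℝ}
    (hX : MemLp (X 0) 2 P) (hindep : iIndepFun X P)
    (hident : ∀ i, IdentDistrib (X i) (X 0) P P) :
    Tendsto (fun n : ℕ ↦
        ∫ ω, min (((√n)⁻¹ * (∑ k ∈ Finset.range n, X k ω - n * P[X 0])) ^ 2) 1 ∂P) atTop
      (𝓝 (∫ x, min (x ^ 2) 1 ∂gaussianReal 0 Var[X 0; P].toNNReal)) := by
  let f : ℝ →ᵇ ℝ := .mkOfBound ⟨fun x ↦ min (x ^ 2) 1, by fun_prop⟩ 1 fun x y ↦ by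
    simp only [ContinuousMap.coe_mk, Real.dist_eq, abs_sub_le_iff]
    constructor <;> linarith [min_le_right (x ^ 2) 1, min_le_right (y ^ 2) 1,
      le_min (sq_nonneg x) zero_le_one, le_min (sq_nonneg y) zero_le_one]
  exact (tendstoInDistribution_inv_sqrt_mul_sum_sub HasLaw.id hX hindep hident)
    |>.tendsto_integral_comp f

lemma integral_min_sq_one_div_le_integral_abs_div_sqrt_rpow {Y : Ω → ℝ}
    (hY : MemLp Y 2 P) {p n : ℝ} (hp0 : 0 < p) (hp2 : p ≤ 2) (hn : 1 ≤ n) :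
    (∫ ω, min (Y ω ^ 2) 1 ∂P) / n ≤ ∫ ω, |Y ω / √n| ^ p ∂P := by
  have hYn : MemLp (fun ω ↦ Y ω * (√n)⁻¹) (ENNReal.ofReal p) P :=
    (hY.mul_const _).mono_exponent (by simpa using ENNReal.ofReal_le_ofReal hp2)
  rw [← integral_div]
  refine integral_mono ?_ ?_ fun ω ↦ min_sq_one_div_le_abs_div_sqrt_rpow hp0 hp2 hn (Y ω)
  · have := hY.aestronglyMeasurable
    exact (integrable_const (1 / n)).mono' (by fun_prop) (ae_of_all _ fun ω ↦ by
      rw [Real.norm_of_nonneg (by positivity)]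
      gcongr
      exact min_le_right _ _)
  · simpa only [Real.norm_eq_abs, ENNReal.toReal_ofReal hp0.le, div_eq_mul_inv] using
      hYn.integrable_norm_rpow (by simpa using hp0) ENNReal.ofReal_ne_top

end Moments

theorem stmt0_general {Ω : Type*} [MeasurableSpace Ω] (P : Measure Ω) [IsProbabilityMeasure P]
    (X : ℕ → Ω → ℝ) (X0 : Ω → ℝ) (μ : ℝ)
    (hindep : iIndepFun X P)
    (hident : ∀ i, IdentDistrib (X i) X0 P P)
    (hL2 : Integrable (fun ω => (X0 ω) ^ 2) P)
    (hmean : ∫ ω, X0 ω ∂P = μ)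
    (hnondeg : ¬ (∀ᵐ ω ∂P, X0 ω = μ))
    (p : ℝ) (hp0 : 0 < p) (hp2 : p ≤ 2) :
    ¬ Summable (fun n : ℕ =>
      ∫ ω, |(∑ i ∈ Finset.range (n + 1), X i ω) / (n + 1) - μ| ^ p ∂P) := by
  have hX0 : MemLp X0 2 P :=
    (memLp_two_iff_integrable_sq (hident 0).aemeasurable_snd.aestronglyMeasurable).mpr hL2
  have hX : MemLp (X 0) 2 P := (hident 0).memLp_iff.mpr hX0
  have hvar : Var[X 0; P].toNNReal ≠ 0 := by
    rw [(hident 0).variance_eq, Ne, Real.toNNReal_eq_zero]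
    intro hle
    rw [← hmean] at hnondeg
    exact hnondeg (ae_eq_integral_of_variance_eq_zero hX0 (hle.antisymm (variance_nonneg _ _)))
  set L := ∫ x, min (x ^ 2) 1 ∂gaussianReal 0 Var[X 0; P].toNNReal
  have hL : 0 < L := integral_min_sq_one_gaussianReal_pos 0 hvar
  have hclt := tendsto_integral_min_sq_one_inv_sqrt_mul_sum_sub hX hindep
    fun i ↦ (hident i).trans (hident 0).symm
  refine not_summable_of_eventually_div_succ_le (half_pos hL) ?_
  filter_upwards [(tendsto_add_atTop_nat 1).eventually
    (hclt.eventually (eventually_ge_nhds (half_lt_self hL)))] with n hn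
  push_cast at hn
  rw [(hident 0).integral_eq, hmean] at hn
  have hY : MemLp (fun ω ↦
      (√(n + 1))⁻¹ * (∑ k ∈ Finset.range (n + 1), X k ω - (n + 1) * μ)) 2 P :=
    ((memLp_finsetSum _ fun i _ ↦ (hident i).symm.memLp_snd hX0).sub (memLp_const _)).const_mul _
  calc L / 2 / (n + 1) ≤ _ / (n + 1) := by gcongr
    _ ≤ _ := integral_min_sq_one_div_le_integral_abs_div_sqrt_rpow hY hp0 hp2 (by simp)
    _ = _ := integral_congr_ae (ae_of_all _ fun ω ↦ by
      have hn1 : (0 : ℝ) < n + 1 := by positivity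
      field_simp
      rw [Real.sq_sqrt hn1.le])

/-- If `X, X₁, X₂, …` are i.i.d. with `E[X²] < ∞`, mean `μ`, and `X` not a.s. equal to `μ`,
then for every `0 < p ≤ 2` the series `∑ₙ E[|Sₙ/n − μ|^p]` diverges. -/
theorem stmt0 {Ω : Type*} [MeasurableSpace Ω] (P : Measure Ω) [IsProbabilityMeasure P]
    (X : ℕ → Ω → ℝ) (X0 : Ω → ℝ) (μ : ℝ)
    (hmeas : ∀ i, Measurable (X i)) (hmeas0 : Measurable X0)
    (hindep : iIndepFun X P)
    (hident : ∀ i, IdentDistrib (X i) X0 P P)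
    (hL2 : Integrable (fun ω => (X0 ω) ^ 2) P)
    (hmean : ∫ ω, X0 ω ∂P = μ)
    (hnondeg : ¬ (∀ᵐ ω ∂P, X0 ω = μ))
    (p : ℝ) (hp0 : 0 < p) (hp2 : p ≤ 2) :
    ¬ Summable (fun n : ℕ =>
      ∫ ω, |(∑ i ∈ Finset.range (n + 1), X i ω) / (n + 1) - μ| ^ p ∂P) :=
  stmt0_general P X X0 μ hindep hident hL2 hmean hnondeg p hp0 hp2
end

section
/- If X, X_1, X_2, ... are i.i.d. with E[|X|^α] < ∞ for some α > 2 and E[X] = 0, then for any p with 2 < p ≤ α and any β > (p+2)/2, ∑_{n=1}^∞ n^{-β} E[|S_n|^p] < ∞. -/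
/-!
Write `Aₙ = E|Sₙ|^p`. Since `p > 2`, the derivative `p |x|^(p-2) x` of `|x|^p` is Lipschitz on
`[-R, R]` with constant `p (p-1) R^(p-2)`, so a second-order Taylor bound gives
`|a + b|^p ≤ |a|^p + p |a|^(p-2) a b + C (|a|^(p-2) b² + |b|^p)`.
Take `a = Sₙ` and `b = X_{n+1}`: by independence and `E X = 0` the linear term has mean zero, the
middle term factorises, and Lyapunov's inequality `E|Sₙ|^(p-2) ≤ Aₙ^((p-2)/p)` yields the recursion
`A_{n+1} ≤ Aₙ + a Aₙ^(1-2/p) + b`. Such a recursion forces `Aₙ = O(n^(p/2))` (the increment of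
`K n^(p/2)` is of order `K n^(p/2-1)`, which dominates `a K^(1-2/p) n^(p/2-1) + b` once `K` is
large), and `∑ n^(p/2-β)` converges because `β > p/2 + 1`.
-/

open Real Filter Topology MeasureTheory ProbabilityTheory

theorem hasDerivAt_abs_rpow_mul_self {q : ℝ} (hq : 0 < q) (x : ℝ) :
    HasDerivAt (fun y => |y| ^ q * y) ((q + 1) * |x| ^ q) x := by
  rcases eq_or_ne x 0 with rfl | hx
  · rw [abs_zero, zero_rpow hq.ne', mul_zero, hasDerivAt_iff_tendsto_slope]
    have hcont : Tendsto (fun y : ℝ => |y| ^ q) (𝓝[≠] 0) (𝓝 0) := by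
      simpa [zero_rpow hq.ne'] using
        (continuous_abs.rpow_const fun _ => Or.inr hq.le).tendsto (0 : ℝ) |>.mono_left
          nhdsWithin_le_nhds
    refine hcont.congr' (eventually_nhdsWithin_of_forall fun y (hy : y ≠ 0) => ?_)
    simp [slope_def_field, abs_zero, zero_rpow hq.ne', hy]
  · have h := ((hasDerivAt_abs hx).rpow_const (p := q) (Or.inl (abs_ne_zero.2 hx))).mul
      (hasDerivAt_id' x)
    have hsign : (SignType.sign x : ℝ) * x = |x| := by
      rcases hx.lt_or_gt with h | h <;> simp [h, abs_of_neg, abs_of_pos]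
    have hpow : |x| ^ (q - 1) * |x| = |x| ^ q := by
      rw [rpow_sub_one (abs_ne_zero.2 hx), div_mul_cancel₀ _ (abs_ne_zero.2 hx)]
    refine h.congr_deriv ?_
    linear_combination q * hpow + q * |x| ^ (q - 1) * hsign

theorem abs_rpow_mul_self_sub_le {q R u v : ℝ} (hq : 0 < q) (hu : |u| ≤ R) (hv : |v| ≤ R) :
    |(|u| ^ q * u) - |v| ^ q * v| ≤ (q + 1) * R ^ q * |u - v| := by
  have hderiv_le : ∀ x ∈ Set.Icc (-R) R, ‖(q + 1) * |x| ^ q‖ ≤ (q + 1) * R ^ q := by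
    intro x hx
    rw [norm_mul, Real.norm_of_nonneg (by linarith), norm_of_nonneg (by positivity)]
    gcongr
    exact abs_le.2 hx
  simpa using Convex.norm_image_sub_le_of_norm_hasDerivWithin_le
    (fun x _ => (hasDerivAt_abs_rpow_mul_self hq x).hasDerivWithinAt) hderiv_le
    (convex_Icc _ _) (abs_le.1 hv) (abs_le.1 hu)

theorem abs_add_rpow_sub_taylor_le {p : ℝ} (hp : 2 < p) (a b : ℝ) :
    |a + b| ^ p - |a| ^ p - p * |a| ^ (p - 2) * a * b ≤
      p * (p - 1) * (|a| + |b|) ^ (p - 2) * b ^ 2 := by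
  set h : ℝ → ℝ := fun t => |a + t * b| ^ p - t * (p * |a| ^ (p - 2) * a * b)
  have hderiv : ∀ t, HasDerivAt h
      (p * (|a + t * b| ^ (p - 2) * (a + t * b) - |a| ^ (p - 2) * a) * b) t := by
    intro t
    have hline : HasDerivAt (fun t => a + t * b) b t := by
      simpa using ((hasDerivAt_id t).mul_const b).const_add a
    refine (((hasDerivAt_abs_rpow _ (by linarith)).comp t hline).sub
      ((hasDerivAt_id t).mul_const _)).congr_deriv ?_
    ring
  have hderiv_le : ∀ t ∈ Set.Icc (0 : ℝ) 1,
      ‖p * (|a + t * b| ^ (p - 2) * (a + t * b) - |a| ^ (p - 2) * a) * b‖ ≤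
        p * (p - 1) * (|a| + |b|) ^ (p - 2) * b ^ 2 := by
    rintro t ⟨ht0, ht1⟩
    have htb : |t * b| ≤ |b| := by
      rw [abs_mul, abs_of_nonneg ht0]
      exact mul_le_of_le_one_left (abs_nonneg b) ht1
    have hlip := abs_rpow_mul_self_sub_le (u := a + t * b) (v := a) (sub_pos.2 hp)
      ((abs_add_le a (t * b)).trans (add_le_add_right htb _))
      (le_add_of_nonneg_right (abs_nonneg b))
    rw [add_sub_cancel_left, show p - 2 + 1 = p - 1 by ring] at hlip
    rw [norm_mul, norm_mul, Real.norm_eq_abs, Real.norm_eq_abs, Real.norm_eq_abs,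
      abs_of_pos (by linarith : 0 < p), ← sq_abs b, sq, ← mul_assoc]
    gcongr ?_ * _
    calc _ ≤ p * ((p - 1) * (|a| + |b|) ^ (p - 2) * |t * b|) := by gcongr
      _ ≤ _ := by
        rw [← mul_assoc, ← mul_assoc]
        have : 0 ≤ p * (p - 1) := by nlinarith
        gcongr
  have hmvt := Convex.norm_image_sub_le_of_norm_hasDerivWithin_le
    (fun t _ => (hderiv t).hasDerivWithinAt) hderiv_le (convex_Icc 0 1)
    (Set.left_mem_Icc.2 zero_le_one) (Set.right_mem_Icc.2 zero_le_one)
  simp only [h, Real.norm_eq_abs, sub_zero, abs_one, mul_one, zero_mul, add_zero, one_mul] at hmvt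
  linarith [le_abs_self (|a + b| ^ p - p * |a| ^ (p - 2) * a * b - |a| ^ p)]

theorem add_rpow_le_two_rpow_mul_add_rpow {x y r : ℝ} (hx : 0 ≤ x) (hy : 0 ≤ y) (hr : 0 ≤ r) :
    (x + y) ^ r ≤ 2 ^ r * (x ^ r + y ^ r) := by
  calc (x + y) ^ r ≤ (2 * max x y) ^ r := by
        gcongr; linarith [le_max_left x y, le_max_right x y]
    _ = 2 ^ r * max x y ^ r := mul_rpow zero_le_two (hx.trans (le_max_left x y))
    _ ≤ 2 ^ r * (x ^ r + y ^ r) := by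
        have := rpow_nonneg hx r
        have := rpow_nonneg hy r
        gcongr
        rcases le_total x y with h | h <;> simp [h] <;> linarith

theorem abs_add_rpow_le {p : ℝ} (hp : 2 < p) (a b : ℝ) :
    |a + b| ^ p ≤ |a| ^ p + p * |a| ^ (p - 2) * a * b +
      p * (p - 1) * 2 ^ (p - 2) * (|a| ^ (p - 2) * b ^ 2 + |b| ^ p) := by
  have hb : |b| ^ (p - 2) * b ^ 2 = |b| ^ p := by
    rw [← sq_abs, ← rpow_natCast, ← rpow_add' (abs_nonneg b) (by norm_num; linarith)]
    norm_num
  have hpp : 0 ≤ p * (p - 1) := by nlinarith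
  calc |a + b| ^ p
      ≤ |a| ^ p + p * |a| ^ (p - 2) * a * b + p * (p - 1) * (|a| + |b|) ^ (p - 2) * b ^ 2 := by
        linarith [abs_add_rpow_sub_taylor_le hp a b]
    _ ≤ |a| ^ p + p * |a| ^ (p - 2) * a * b +
          p * (p - 1) * (2 ^ (p - 2) * (|a| ^ (p - 2) + |b| ^ (p - 2))) * b ^ 2 := by
        gcongr
        exact add_rpow_le_two_rpow_mul_add_rpow (abs_nonneg a) (abs_nonneg b) (by linarith)
    _ = _ := by rw [← hb]; ring

theorem rpow_add_mul_rpow_sub_one_le {r x : ℝ} (hr : 1 ≤ r) (hx : 0 < x) :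
    x ^ r + r * x ^ (r - 1) ≤ (x + 1) ^ r := by
  calc x ^ r + r * x ^ (r - 1) = x ^ r * (1 + r * x⁻¹) := by
        rw [rpow_sub_one hx.ne']; field_simp
    _ ≤ x ^ r * (1 + x⁻¹) ^ r := by
        gcongr
        exact one_add_mul_self_le_rpow_one_add (by linarith [inv_pos.2 hx]) hr
    _ = (x + 1) ^ r := by
        rw [← mul_rpow hx.le (by positivity), mul_one_add, mul_inv_cancel₀ hx.ne']

theorem exists_le_mul_add_one_rpow_of_le_add_rpow {A : ℕ → ℝ} {a b r : ℝ} (hr : 1 ≤ r)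
    (ha : 0 ≤ a) (hb : 0 ≤ b) (hA : ∀ n, 0 ≤ A n)
    (hrec : ∀ n, A (n + 1) ≤ A n + a * A n ^ (1 - r⁻¹) + b) :
    ∃ K, ∀ n : ℕ, A n ≤ K * ((n : ℝ) + 1) ^ r := by
  have hr0 : 0 < r := by linarith
  have he : 0 ≤ 1 - r⁻¹ := sub_nonneg.2 (inv_le_one_of_one_le₀ hr)
  set K := max (max 1 (A 0)) (((a + b) / r) ^ r)
  have hK1 : 1 ≤ K := le_max_of_le_left (le_max_left _ _)
  have hK : a * K ^ (1 - r⁻¹) + b ≤ r * K := by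
    have h1 : 1 ≤ K ^ (1 - r⁻¹) := one_le_rpow hK1 he
    have h2 : (a + b) / r ≤ K ^ r⁻¹ :=
      (le_rpow_inv_iff_of_pos (by positivity) (by positivity) hr0).2 (le_max_right _ _)
    calc a * K ^ (1 - r⁻¹) + b ≤ r * ((a + b) / r) * K ^ (1 - r⁻¹) := by
          rw [mul_div_cancel₀ _ hr0.ne']; nlinarith
      _ ≤ r * K ^ r⁻¹ * K ^ (1 - r⁻¹) := by gcongr
      _ = r * K := by rw [mul_assoc, ← rpow_add (by positivity)]; norm_num
  refine ⟨K, fun n => ?_⟩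
  induction n with
  | zero =>
    rw [Nat.cast_zero, zero_add, one_rpow, mul_one]
    exact le_max_of_le_left (le_max_right _ _)
  | succ n ih =>
    set N : ℝ := n + 1
    have hN : 1 ≤ N := by simp [N]
    have hpow : (K * N ^ r) ^ (1 - r⁻¹) = K ^ (1 - r⁻¹) * N ^ (r - 1) := by
      rw [mul_rpow (by positivity) (by positivity), ← rpow_mul (by positivity)]
      congr 2; field_simp
    calc A (n + 1) ≤ A n + a * A n ^ (1 - r⁻¹) + b := hrec n
      _ ≤ K * N ^ r + a * (K * N ^ r) ^ (1 - r⁻¹) + b * N ^ (r - 1) := by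
          gcongr ?_ + _ * ?_ + ?_
          · exact rpow_le_rpow (hA n) ih he
          · exact le_mul_of_one_le_right hb (one_le_rpow hN (by linarith))
      _ = K * N ^ r + (a * K ^ (1 - r⁻¹) + b) * N ^ (r - 1) := by rw [hpow]; ring
      _ ≤ K * N ^ r + r * K * N ^ (r - 1) := by gcongr
      _ = K * (N ^ r + r * N ^ (r - 1)) := by ring
      _ ≤ K * (N + 1) ^ r := by gcongr; exact rpow_add_mul_rpow_sub_one_le hr (by positivity)
      _ = K * (((n + 1 : ℕ) : ℝ) + 1) ^ r := by push_cast; ring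

theorem summable_add_one_rpow_neg_mul_of_le {A : ℕ → ℝ} {K r β : ℝ} (hA : ∀ n, 0 ≤ A n)
    (hK : ∀ n : ℕ, A n ≤ K * ((n : ℝ) + 1) ^ r) (hβ : r + 1 < β) :
    Summable fun n : ℕ => ((n : ℝ) + 1) ^ (-β) * A n := by
  have hsum : Summable fun n : ℕ => K * ((n : ℝ) + 1) ^ (r - β) := by
    have := (summable_nat_add_iff 1).2 (Real.summable_nat_rpow.2 (by linarith : r - β < -1))
    push_cast at this
    exact this.mul_left K
  refine hsum.of_nonneg_of_le (fun n => mul_nonneg (by positivity) (hA n)) fun n => ?_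
  calc _ ≤ ((n : ℝ) + 1) ^ (-β) * (K * ((n : ℝ) + 1) ^ r) := by gcongr; exact hK n
    _ = K * ((n : ℝ) + 1) ^ (r - β) := by
      rw [sub_eq_neg_add, rpow_add (by positivity)]; ring

section Moments

variable {Ω : Type*} [MeasurableSpace Ω] {μ : Measure Ω}

theorem MeasureTheory.MemLp.integrable_abs_rpow [IsFiniteMeasure μ] {f : Ω → ℝ} {p q : ℝ}
    (hf : MemLp f (ENNReal.ofReal p) μ) (hq : 0 ≤ q) (hqp : q ≤ p) :
    Integrable (fun ω => |f ω| ^ q) μ := by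
  simpa [ENNReal.toReal_ofReal hq] using
    (hf.mono_exponent (ENNReal.ofReal_le_ofReal hqp)).integrable_norm_rpow'

theorem MeasureTheory.memLp_ofReal_of_integrable_abs_rpow {f : Ω → ℝ} {p : ℝ} (hp : 0 < p)
    (hf : AEStronglyMeasurable f μ) (hint : Integrable (fun ω => |f ω| ^ p) μ) :
    MemLp f (ENNReal.ofReal p) μ :=
  (integrable_norm_rpow_iff hf (by simpa using hp) ENNReal.ofReal_ne_top).1
    (by simpa [ENNReal.toReal_ofReal hp.le] using hint)

theorem integral_abs_rpow_le_integral_abs_rpow_rpow [IsProbabilityMeasure μ] {f : Ω → ℝ}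
    {q r : ℝ} (hq : 0 < q) (hqr : q ≤ r) (hf : MemLp f (ENNReal.ofReal r) μ) :
    ∫ ω, |f ω| ^ q ∂μ ≤ (∫ ω, |f ω| ^ r ∂μ) ^ (q / r) := by
  have hr : 0 < r := hq.trans_le hqr
  have hpow : ∀ ω, |f ω| ^ q = (|f ω| ^ r) ^ (q / r) := fun ω => by
    rw [← rpow_mul (abs_nonneg _), mul_div_cancel₀ _ hr.ne']
  simp_rw [hpow]
  refine (concaveOn_rpow (div_nonneg hq.le hr.le) ((div_le_one hr).2 hqr)).le_map_integral
    (continuous_rpow_const (div_nonneg hq.le hr.le)).continuousOn isClosed_Ici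
    (ae_of_all _ fun ω => rpow_nonneg (abs_nonneg _) _) (hf.integrable_abs_rpow hr.le le_rfl) ?_
  simpa [Function.comp_def, hpow] using hf.integrable_abs_rpow hq.le hqr

theorem integral_abs_add_rpow_le [IsProbabilityMeasure μ] {S Y : Ω → ℝ} {p : ℝ} (hp : 2 < p)
    (hSY : IndepFun S Y μ) (hS : MemLp S (ENNReal.ofReal p) μ) (hY : MemLp Y (ENNReal.ofReal p) μ)
    (hY0 : ∫ ω, Y ω ∂μ = 0) :
    ∫ ω, |S ω + Y ω| ^ p ∂μ ≤ ∫ ω, |S ω| ^ p ∂μ + p * (p - 1) * 2 ^ (p - 2) *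
      ((∫ ω, |S ω| ^ p ∂μ) ^ ((p - 2) / p) * ∫ ω, Y ω ^ 2 ∂μ + ∫ ω, |Y ω| ^ p ∂μ) := by
  set c := p * (p - 1) * 2 ^ (p - 2)
  have hc : 0 ≤ c := mul_nonneg (by nlinarith) (rpow_nonneg zero_le_two _)
  set φ : ℝ → ℝ := fun x => p * |x| ^ (p - 2) * x
  have hφ : Measurable φ := by fun_prop
  have hSφY : IndepFun (fun ω => φ (S ω)) Y μ := hSY.comp hφ measurable_id
  have hSY2 : IndepFun (fun ω => |S ω| ^ (p - 2)) (fun ω => Y ω ^ 2) μ :=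
    hSY.comp (φ := fun x => |x| ^ (p - 2)) (ψ := fun x => x ^ 2) (by fun_prop) (by fun_prop)
  have hY1 : Integrable Y μ := hY.integrable (by simpa using hp.le.trans' one_le_two)
  have hY2 : Integrable (fun ω => Y ω ^ 2) μ :=
    (hY.mono_exponent (by simpa using ENNReal.ofReal_le_ofReal hp.le)).integrable_sq
  have hS2 : Integrable (fun ω => |S ω| ^ (p - 2)) μ :=
    hS.integrable_abs_rpow (by linarith) (by linarith)
  have hφS : Integrable (fun ω => φ (S ω)) μ := by
    refine ((hS.integrable_abs_rpow (q := p - 1) (by linarith) (by linarith)).const_mul p).mono'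
      (hφ.comp_aemeasurable hS.aestronglyMeasurable.aemeasurable).aestronglyMeasurable
      (ae_of_all _ fun ω => le_of_eq ?_)
    rw [Real.norm_eq_abs, abs_mul, abs_mul, abs_of_pos (by linarith : 0 < p),
      abs_of_nonneg (rpow_nonneg (abs_nonneg _) _), mul_assoc,
      ← rpow_add_one' (abs_nonneg _) (by linarith)]
    ring_nf
  have hint₁ := hS.integrable_abs_rpow (by linarith) le_rfl
  have hint₂ : Integrable (fun ω => φ (S ω) * Y ω) μ := hSφY.integrable_mul hφS hY1
  have hint₃ : Integrable (fun ω => |S ω| ^ (p - 2) * Y ω ^ 2) μ := hSY2.integrable_mul hS2 hY2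
  have hint₄ := hY.integrable_abs_rpow (by linarith) le_rfl
  have hcross : ∫ ω, φ (S ω) * Y ω ∂μ = 0 := by
    rw [hSφY.integral_fun_mul_eq_mul_integral hφS.1 hY1.1, hY0, mul_zero]
  calc ∫ ω, |S ω + Y ω| ^ p ∂μ
      ≤ ∫ ω, |S ω| ^ p + φ (S ω) * Y ω + c * (|S ω| ^ (p - 2) * Y ω ^ 2 + |Y ω| ^ p) ∂μ :=
        integral_mono ((hS.add hY).integrable_abs_rpow (by linarith) le_rfl)
          ((hint₁.fun_add hint₂).fun_add ((hint₃.fun_add hint₄).const_mul c))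
          fun ω => abs_add_rpow_le hp (S ω) (Y ω)
    _ = ∫ ω, |S ω| ^ p ∂μ +
          c * ((∫ ω, |S ω| ^ (p - 2) ∂μ) * ∫ ω, Y ω ^ 2 ∂μ + ∫ ω, |Y ω| ^ p ∂μ) := by
        rw [integral_add (hint₁.fun_add hint₂) ((hint₃.fun_add hint₄).const_mul c),
          integral_add hint₁ hint₂, integral_const_mul, integral_add hint₃ hint₄, hcross,
          hSY2.integral_fun_mul_eq_mul_integral hS2.1 hY2.1, add_zero]
    _ ≤ _ := by
        have : 0 ≤ ∫ ω, Y ω ^ 2 ∂μ := integral_nonneg fun ω => sq_nonneg (Y ω)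
        gcongr
        exact integral_abs_rpow_le_integral_abs_rpow_rpow (by linarith) (by linarith) hS

theorem exists_integral_abs_sum_range_rpow_le [IsProbabilityMeasure μ] {X : ℕ → Ω → ℝ}
    {X0 : Ω → ℝ} {p : ℝ} (hp : 2 < p) (hmeas : ∀ i, Measurable (X i)) (hindep : iIndepFun X μ)
    (hident : ∀ i, IdentDistrib (X i) X0 μ μ) (hX0 : MemLp X0 (ENNReal.ofReal p) μ)
    (hmean : ∫ ω, X0 ω ∂μ = 0) :
    ∃ K, ∀ n : ℕ,
      ∫ ω, |∑ i ∈ Finset.range (n + 1), X i ω| ^ p ∂μ ≤ K * ((n : ℝ) + 1) ^ (p / 2) := by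
  have hX : ∀ i, MemLp (X i) (ENNReal.ofReal p) μ := fun i => (hident i).symm.memLp_snd hX0
  have hm2 : ∀ i, ∫ ω, X i ω ^ 2 ∂μ = ∫ ω, X0 ω ^ 2 ∂μ := fun i =>
    ((hident i).comp (measurable_id.pow_const 2)).integral_eq
  have hmp : ∀ i, ∫ ω, |X i ω| ^ p ∂μ = ∫ ω, |X0 ω| ^ p ∂μ := fun i =>
    ((hident i).comp (by fun_prop : Measurable fun x : ℝ => |x| ^ p)).integral_eq
  have hexp : (p - 2) / p = 1 - (p / 2)⁻¹ := by field_simp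
  set c := p * (p - 1) * 2 ^ (p - 2)
  have hc : 0 ≤ c := mul_nonneg (by nlinarith) (rpow_nonneg zero_le_two _)
  refine exists_le_mul_add_one_rpow_of_le_add_rpow
    (a := c * ∫ ω, X0 ω ^ 2 ∂μ) (b := c * ∫ ω, |X0 ω| ^ p ∂μ) (by linarith)
    (mul_nonneg hc (integral_nonneg fun ω => sq_nonneg _))
    (mul_nonneg hc (integral_nonneg fun ω => rpow_nonneg (abs_nonneg _) _))
    (fun n => integral_nonneg fun ω => rpow_nonneg (abs_nonneg _) _) fun n => ?_
  have hstep := integral_abs_add_rpow_le hp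
    (hindep.indepFun_finsetSum_of_notMem hmeas Finset.notMem_range_self)
    (memLp_finsetSum' _ fun i _ => hX i) (hX (n + 1)) ((hident (n + 1)).integral_eq.trans hmean)
  simp only [Finset.sum_apply, hm2, hmp, hexp] at hstep
  simp only [Finset.sum_range_succ _ (n + 1)]
  linarith

end Moments

theorem stmt2_general {Ω : Type*} [MeasurableSpace Ω] (P : Measure Ω) [IsProbabilityMeasure P]
    (X : ℕ → Ω → ℝ) (X0 : Ω → ℝ) (α : ℝ)
    (hmeas : ∀ i, Measurable (X i)) (hmeas0 : Measurable X0)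
    (hindep : iIndepFun X P)
    (hident : ∀ i, IdentDistrib (X i) X0 P P)
    (hmom : Integrable (fun ω => |X0 ω| ^ α) P)
    (hmean : ∫ ω, X0 ω ∂P = 0)
    (p β : ℝ) (hp2 : 2 < p) (hpα : p ≤ α) (hβ : (p + 2) / 2 < β) :
    Summable (fun n : ℕ =>
      ((n : ℝ) + 1) ^ (-β) * ∫ ω, |∑ i ∈ Finset.range (n + 1), X i ω| ^ p ∂P) := by
  have hX0 : MemLp X0 (ENNReal.ofReal p) P :=
    (memLp_ofReal_of_integrable_abs_rpow (by linarith) hmeas0.aestronglyMeasurable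
      hmom).mono_exponent (ENNReal.ofReal_le_ofReal hpα)
  obtain ⟨K, hK⟩ := exists_integral_abs_sum_range_rpow_le hp2 hmeas hindep hident hX0 hmean
  exact summable_add_one_rpow_neg_mul_of_le
    (fun n => integral_nonneg fun ω => rpow_nonneg (abs_nonneg _) _) hK (by linarith)

/-- If `X, X₁, X₂, …` are i.i.d. with `E[|X|^α] < ∞` for some `α > 2` and `E[X] = 0`, then for
any `2 < p ≤ α` and any `β > (p+2)/2`, `∑ₙ n^{-β} E[|Sₙ|^p] < ∞`. -/
theorem stmt2 {Ω : Type*} [MeasurableSpace Ω] (P : Measure Ω) [IsProbabilityMeasure P]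
    (X : ℕ → Ω → ℝ) (X0 : Ω → ℝ) (α : ℝ) (hα : 2 < α)
    (hmeas : ∀ i, Measurable (X i)) (hmeas0 : Measurable X0)
    (hindep : iIndepFun X P)
    (hident : ∀ i, IdentDistrib (X i) X0 P P)
    (hmom : Integrable (fun ω => |X0 ω| ^ α) P)
    (hmean : ∫ ω, X0 ω ∂P = 0)
    (p β : ℝ) (hp2 : 2 < p) (hpα : p ≤ α) (hβ : (p + 2) / 2 < β) :
    Summable (fun n : ℕ =>
      ((n : ℝ) + 1) ^ (-β) * ∫ ω, |∑ i ∈ Finset.range (n + 1), X i ω| ^ p ∂P) :=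
  stmt2_general P X X0 α hmeas hmeas0 hindep hident hmom hmean p β hp2 hpα hβ
end

section
/- If X, X_1, X_2, ... are i.i.d. with E[X^4] < ∞, mean μ, and X is not a.s. equal to μ, then for every 0 < α ≤ 2, almost surely ∑_{n=1}^∞ |S_n/n - μ|^α = ∞. -/
/-!
Centre the variables, `Y i = X i - μ`, and let `σ2 = E[Y²] > 0`. Independence gives
`E[(Y₀ + ⋯ + Yₙ₋₁)²] = n σ2` and `E[(Y₀ + ⋯ + Yₙ₋₁)⁴] ≤ n² (E[Y⁴] + 3 σ2²)`, so the block sum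
`V_N = ∑_{N ≤ n < 2N} (Y₀ + ⋯ + Yₙ)²` has `E[V_N] ≥ N² σ2` and `E[V_N²] ≤ 4 (E[Y⁴] + 3 σ2²) N⁴`.
By Paley–Zygmund, `V_N ≥ N² σ2 / 2` with probability bounded below uniformly in `N`, hence with
positive probability for infinitely many `N`; each such block contributes at least `σ2 / 8` to
`∑ₙ (Sₙ/n - μ)²`, which therefore diverges with positive probability. Divergence is a tail event,
so by Kolmogorov's 0-1 law it is almost sure. For `α ≤ 2` the terms `|Sₙ/n - μ|^α` dominate the
squares as soon as they are below `1`.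
-/

open MeasureTheory ProbabilityTheory Filter Finset Topology

lemma summable_sq_of_summable_abs_rpow {a : ℕ → ℝ} {α : ℝ} (hα0 : 0 < α) (hα2 : α ≤ 2)
    (h : Summable fun n => |a n| ^ α) : Summable fun n => a n ^ 2 := by
  have hα : Memℓp a (ENNReal.ofReal α) :=
    (memℓp_gen_iff (by simpa [ENNReal.toReal_ofReal hα0.le] using hα0)).2
      (by simpa [ENNReal.toReal_ofReal hα0.le] using h)
  have h2 : Memℓp a 2 := hα.of_exponent_ge (by simpa using ENNReal.ofReal_le_ofReal hα2)
  simpa using (memℓp_gen_iff (p := 2) (by norm_num)).1 h2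

lemma summable_sq_of_summable_sq_sub {a b : ℕ → ℝ} (hb : Summable fun n => b n ^ 2)
    (hab : Summable fun n => (a n - b n) ^ 2) : Summable fun n => a n ^ 2 :=
  ((hb.add hab).mul_left 2).of_nonneg_of_le (fun n => sq_nonneg _)
    (fun n => by nlinarith [sq_nonneg (a n - 2 * b n)])

lemma summable_sq_div_succ (c : ℝ) : Summable fun n : ℕ => (c / (n + 1)) ^ 2 := by
  have := ((summable_nat_add_iff 1).2
    (Real.summable_one_div_nat_pow.2 one_lt_two)).mul_left (c ^ 2)
  refine this.congr fun n => ?_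
  push_cast
  field_simp

lemma tendsto_sum_Ico_two_mul {G : Type*} [AddCommGroup G] [TopologicalSpace G]
    [IsTopologicalAddGroup G] {f : ℕ → G} (hf : Summable f) :
    Tendsto (fun N => ∑ n ∈ Ico N (2 * N), f n) atTop (𝓝 0) := by
  have h := hf.tendsto_sum_tsum_nat
  have h2 := h.comp (tendsto_id.const_mul_atTop' two_pos)
  simpa [Function.comp_def, sum_Ico_eq_sub _ (Nat.le_mul_of_pos_left _ two_pos)] using h2.sub h

lemma le_measure_limsup_atTop {α : Type*} {m : MeasurableSpace α} {μ : Measure α}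
    [IsFiniteMeasure μ] {s : ℕ → Set α} (hs : ∀ n, NullMeasurableSet (s n) μ) {δ : ENNReal}
    (h : ∀ᶠ n in atTop, δ ≤ μ (s n)) : δ ≤ μ (limsup s atTop) := by
  rw [limsup_eq_iInf_iSup_of_nat]
  simp only [Set.iInf_eq_iInter, Set.iSup_eq_iUnion]
  rw [Antitone.measure_iInter]
  · refine le_iInf fun N => ?_
    obtain ⟨n, hn, hNn⟩ := (h.and (eventually_ge_atTop N)).exists
    exact hn.trans (measure_mono (Set.subset_biUnion_of_mem (u := s) hNn))
  · exact fun M N hMN => Set.biUnion_mono (fun i hi => hMN.trans hi) fun _ _ => le_rfl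
  · exact fun N => .iUnion fun i => .iUnion fun _ => hs i
  · exact ⟨0, measure_ne_top _ _⟩

lemma measurableSet_summable_of_nonneg {Ω : Type*} {m : MeasurableSpace Ω} {f : ℕ → Ω → ℝ}
    (hf : ∀ n, Measurable (f n)) (h0 : ∀ n ω, 0 ≤ f n ω) :
    MeasurableSet {ω | Summable fun n => f n ω} := by
  have h := measurableSet_exists_tendsto (l := atTop)
    fun n => Finset.measurable_sum (range n) fun i _ => hf i
  convert h using 1
  ext ω
  exact ⟨fun hs => ⟨_, (hasSum_iff_tendsto_nat_of_nonneg (h0 · ω) _).1 hs.hasSum⟩,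
    fun ⟨c, hc⟩ => ((hasSum_iff_tendsto_nat_of_nonneg (h0 · ω) c).2 hc).summable⟩

lemma measurableSet_limsup_summable_sq_average {Ω : Type*} (Y : ℕ → Ω → ℝ) :
    MeasurableSet[limsup (fun i => MeasurableSpace.comap (Y i) inferInstance) atTop]
      {ω | Summable fun n : ℕ => ((∑ i ∈ range (n + 1), Y i ω) / (n + 1)) ^ 2} := by
  rw [limsup_eq_iInf_iSup_of_nat, MeasurableSpace.measurableSet_iInf]
  intro K
  let b (n : ℕ) (ω : Ω) : ℝ := (∑ i ∈ (range (n + 1)).filter (K ≤ ·), Y i ω) / (n + 1)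
  have hb (n : ℕ) : Measurable[⨆ i ≥ K, MeasurableSpace.comap (Y i) inferInstance] (b n) :=
    .div_const (Finset.measurable_sum _ fun i hi => (comap_measurable (Y i)).mono
      (le_iSup₂ (f := fun i (_ : i ≥ K) => MeasurableSpace.comap (Y i) inferInstance) i
        (mem_filter.1 hi).2) le_rfl) _
  -- the first `K` variables only contribute `O(1/n)`, which is square-summable
  have hdiff (ω : Ω) : Summable fun n : ℕ =>
      ((∑ i ∈ range (n + 1), Y i ω) / (n + 1) - b n ω) ^ 2 := by
    refine (summable_sq_div_succ (∑ i ∈ range K, |Y i ω|)).of_nonneg_of_le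
      (fun n => sq_nonneg _) fun n => ?_
    rw [← sub_div, ← sum_filter_add_sum_filter_not _ (K ≤ ·), add_sub_cancel_left, div_pow,
      div_pow, ← sq_abs]
    gcongr
    refine (abs_sum_le_sum_abs _ _).trans
      (sum_le_sum_of_subset_of_nonneg ?_ fun _ _ _ => abs_nonneg _)
    intro i hi
    simp only [mem_filter, mem_range, not_le] at hi ⊢
    exact hi.2
  convert measurableSet_summable_of_nonneg (fun n => (hb n).pow_const 2)
    (fun n ω => sq_nonneg (b n ω)) using 1
  ext ω
  exact ⟨fun ha => summable_sq_of_summable_sq_sub ha (by simpa only [sub_sq_comm] using hdiff ω),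
    fun hb => summable_sq_of_summable_sq_sub hb (hdiff ω)⟩

def blockSqSum {Ω : Type*} (Y : ℕ → Ω → ℝ) (N : ℕ) (ω : Ω) : ℝ :=
  ∑ n ∈ Ico N (2 * N), (∑ i ∈ range (n + 1), Y i ω) ^ 2

lemma blockSqSum_div_le_sum_sq_average {Ω : Type*} (Y : ℕ → Ω → ℝ) (N : ℕ) (ω : Ω) :
    blockSqSum Y N ω / (2 * N) ^ 2 ≤
      ∑ n ∈ Ico N (2 * N), ((∑ i ∈ range (n + 1), Y i ω) / (n + 1)) ^ 2 := by
  rw [blockSqSum, sum_div]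
  refine sum_le_sum fun n hn => ?_
  rw [div_pow]
  have : (n : ℝ) + 1 ≤ 2 * N := by exact_mod_cast (mem_Ico.1 hn).2
  gcongr

section Moments

variable {Ω : Type*} [MeasurableSpace Ω] {P : Measure Ω}

lemma MeasureTheory.MemLp.integrable_pow_of_le [IsFiniteMeasure P] {f : Ω → ℝ} {p k : ℕ}
    (hf : MemLp f p P) (hk : k ≤ p) : Integrable (fun ω => f ω ^ k) P := by
  have h := (hf.mono_exponent (by exact_mod_cast hk : (k : ENNReal) ≤ p)).integrable_norm_pow'
  exact (integrable_norm_iff (hf.aestronglyMeasurable.pow k)).1 (by simpa [norm_pow] using h)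

lemma ProbabilityTheory.IndepFun.integral_add_pow [IsFiniteMeasure P] {T W : Ω → ℝ}
    (hTW : IndepFun T W P) {n : ℕ} (hT : MemLp T n P) (hW : MemLp W n P) :
    ∫ ω, (T ω + W ω) ^ n ∂P =
      ∑ k ∈ range (n + 1), (∫ ω, T ω ^ k ∂P) * (∫ ω, W ω ^ (n - k) ∂P) * n.choose k := by
  simp_rw [add_pow]
  rw [integral_finsetSum]
  · refine sum_congr rfl fun k _ => ?_
    rw [integral_mul_const, hTW.integral_fun_comp_mul_comp (f := (· ^ k)) (g := (· ^ (n - k)))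
      hT.aemeasurable hW.aemeasurable (by fun_prop) (by fun_prop)]
  · intro k hk
    have hprod := (hTW.comp (measurable_id.pow_const k)
      (measurable_id.pow_const (n - k))).integrable_mul
      (hT.integrable_pow_of_le (mem_range_succ_iff.1 hk)) (hW.integrable_pow_of_le (n.sub_le k))
    exact hprod.mul_const _

lemma sq_integral_le_integral_sq_mul_measureReal_univ [IsFiniteMeasure P] {V : Ω → ℝ}
    (hV : MemLp V 2 P) : (∫ ω, V ω ∂P) ^ 2 ≤ (∫ ω, V ω ^ 2 ∂P) * P.real Set.univ := by
  set m := ∫ ω, V ω ∂P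
  set p := P.real Set.univ
  rcases (measureReal_nonneg : 0 ≤ p).eq_or_lt with hp | hp
  · have hP : P = 0 := Measure.measure_univ_eq_zero.1 ((measureReal_eq_zero_iff).1 hp.symm)
    simp [m, hP]
  have hV2 : Integrable (fun ω => V ω ^ 2) P := hV.integrable_sq
  -- integrate `(p V - m)² ≥ 0`
  have h := integral_mono (f := fun ω => 2 * p * m * V ω) (g := fun ω => p ^ 2 * V ω ^ 2 + m ^ 2)
    ((hV.integrable one_le_two).const_mul (2 * p * m))
    ((hV2.const_mul (p ^ 2)).add (integrable_const (m ^ 2)))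
    fun ω => by nlinarith [sq_nonneg (p * V ω - m)]
  rw [integral_const_mul, integral_add (hV2.const_mul _) (integrable_const _), integral_const_mul,
    integral_const, smul_eq_mul] at h
  nlinarith

-- Paley–Zygmund
lemma sq_le_integral_sq_mul_measureReal_ge [IsProbabilityMeasure P] {V : Ω → ℝ}
    (hV : MemLp V 2 P) {r : ℝ} (hr : 0 ≤ r) (hEV : 2 * r ≤ ∫ ω, V ω ∂P) :
    r ^ 2 ≤ (∫ ω, V ω ^ 2 ∂P) * P.real {ω | r ≤ V ω} := by
  set A := {ω | r ≤ V ω}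
  have hA : NullMeasurableSet A P := nullMeasurableSet_le aemeasurable_const hV.aemeasurable
  have hV1 : Integrable V P := hV.integrable one_le_two
  have hAc : ∫ ω in Aᶜ, V ω ∂P ≤ r := by
    calc ∫ ω in Aᶜ, V ω ∂P ≤ ∫ _ in Aᶜ, r ∂P := by
          refine setIntegral_mono_ae_restrict hV1.integrableOn integrableOn_const ?_
          filter_upwards [ae_restrict_mem₀ hA.compl] with ω hω
          exact (not_le.1 (show ¬r ≤ V ω from hω)).le
      _ = P.real Aᶜ * r := by rw [setIntegral_const, smul_eq_mul]
      _ ≤ r := mul_le_of_le_one_left hr measureReal_le_one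
  have hA_int : r ≤ ∫ ω in A, V ω ∂P := by
    linarith [integral_add_compl₀ hA hV1]
  have hCS := sq_integral_le_integral_sq_mul_measureReal_univ (hV.restrict A)
  rw [measureReal_restrict_apply_univ] at hCS
  have hA_sq : ∫ ω in A, V ω ^ 2 ∂P ≤ ∫ ω, V ω ^ 2 ∂P :=
    setIntegral_le_integral hV.integrable_sq (ae_of_all _ fun ω => sq_nonneg _)
  calc r ^ 2 ≤ (∫ ω in A, V ω ∂P) ^ 2 := pow_le_pow_left₀ hr hA_int 2
    _ ≤ (∫ ω in A, V ω ^ 2 ∂P) * P.real A := hCS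
    _ ≤ (∫ ω, V ω ^ 2 ∂P) * P.real A := by gcongr

variable {Y : ℕ → Ω → ℝ} {σ2 M : ℝ}

lemma nonneg_of_integral_pow_four_le (h4 : ∀ i, ∫ ω, Y i ω ^ 4 ∂P ≤ M) : 0 ≤ M :=
  (integral_nonneg fun ω => by positivity).trans (h4 0)

lemma memLp_blockSqSum [IsFiniteMeasure P] (h4int : ∀ i, MemLp (Y i) 4 P) (N : ℕ) :
    MemLp (blockSqSum Y N) 2 P := by
  refine memLp_finsetSum _ fun n _ => ?_
  have hZ : MemLp (fun ω => ∑ i ∈ range (n + 1), Y i ω) (4 : ℕ) P :=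
    memLp_finsetSum _ fun i _ => h4int i
  refine (memLp_two_iff_integrable_sq (hZ.aestronglyMeasurable.pow 2)).2 ?_
  simpa only [Pi.pow_apply, ← pow_mul] using hZ.integrable_pow_of_le le_rfl

variable [IsProbabilityMeasure P]

lemma integral_sum_range_sq (hY : ∀ i, Measurable (Y i)) (hind : iIndepFun Y P)
    (h2int : ∀ i, MemLp (Y i) 2 P) (h1 : ∀ i, ∫ ω, Y i ω ∂P = 0)
    (h2 : ∀ i, ∫ ω, Y i ω ^ 2 ∂P = σ2) (n : ℕ) :
    ∫ ω, (∑ i ∈ range n, Y i ω) ^ 2 ∂P = n * σ2 := by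
  induction n with
  | zero => simp
  | succ n ih =>
    have hTW := hind.indepFun_finsetSum_of_notMem hY (notMem_range_self (n := n))
    rw [Finset.sum_fn] at hTW
    simp only [sum_range_succ]
    rw [hTW.integral_add_pow (n := 2) (memLp_finsetSum _ fun i _ => h2int i) (h2int n)]
    simp [sum_range_succ, h1, h2, ih]
    ring

lemma integral_sum_range_pow_four_le (hY : ∀ i, Measurable (Y i)) (hind : iIndepFun Y P)
    (h4int : ∀ i, MemLp (Y i) 4 P) (h1 : ∀ i, ∫ ω, Y i ω ∂P = 0)
    (h2 : ∀ i, ∫ ω, Y i ω ^ 2 ∂P = σ2) (h4 : ∀ i, ∫ ω, Y i ω ^ 4 ∂P ≤ M) (n : ℕ) :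
    ∫ ω, (∑ i ∈ range n, Y i ω) ^ 4 ∂P ≤ n ^ 2 * (M + 3 * σ2 ^ 2) := by
  have hM := nonneg_of_integral_pow_four_le h4
  have h2int (i : ℕ) : MemLp (Y i) 2 P := (h4int i).mono_exponent (by norm_num)
  induction n with
  | zero => simp
  | succ n ih =>
    have hTW := hind.indepFun_finsetSum_of_notMem hY (notMem_range_self (n := n))
    rw [Finset.sum_fn] at hTW
    have hT1 : ∫ ω, ∑ i ∈ range n, Y i ω ∂P = 0 := by
      rw [integral_finsetSum _ fun i _ => (h2int i).integrable one_le_two]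
      simp [h1]
    simp only [sum_range_succ]
    rw [hTW.integral_add_pow (n := 4) (memLp_finsetSum _ fun i _ => h4int i) (h4int n)]
    simp [sum_range_succ, h1, hT1, h2, integral_sum_range_sq hY hind h2int h1 h2]
    have h42 : (Nat.choose 4 2 : ℝ) = 6 := by norm_num [Nat.choose]
    rw [h42]
    nlinarith [h4 n, sq_nonneg σ2, mul_nonneg (Nat.cast_nonneg (α := ℝ) n) (sq_nonneg σ2)]

lemma le_integral_blockSqSum (hY : ∀ i, Measurable (Y i)) (hind : iIndepFun Y P)
    (h4int : ∀ i, MemLp (Y i) 4 P) (h1 : ∀ i, ∫ ω, Y i ω ∂P = 0)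
    (h2 : ∀ i, ∫ ω, Y i ω ^ 2 ∂P = σ2) (hσ : 0 ≤ σ2) (N : ℕ) :
    (N : ℝ) ^ 2 * σ2 ≤ ∫ ω, blockSqSum Y N ω ∂P := by
  have h2int (i : ℕ) : MemLp (Y i) 2 P := (h4int i).mono_exponent (by norm_num)
  unfold blockSqSum
  rw [integral_finsetSum _ fun n _ => (memLp_finsetSum _ fun i _ => h2int i).integrable_sq]
  calc (N : ℝ) ^ 2 * σ2 = ∑ _n ∈ Ico N (2 * N), (N : ℝ) * σ2 := by
        rw [sum_const, Nat.card_Ico, two_mul, Nat.add_sub_cancel, nsmul_eq_mul]; ring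
    _ ≤ _ := by
      refine sum_le_sum fun n hn => ?_
      rw [integral_sum_range_sq hY hind h2int h1 h2]
      have : (N : ℝ) ≤ (n + 1 : ℕ) := by exact_mod_cast (mem_Ico.1 hn).1.trans n.le_succ
      gcongr

lemma integral_blockSqSum_sq_le (hY : ∀ i, Measurable (Y i)) (hind : iIndepFun Y P)
    (h4int : ∀ i, MemLp (Y i) 4 P) (h1 : ∀ i, ∫ ω, Y i ω ∂P = 0)
    (h2 : ∀ i, ∫ ω, Y i ω ^ 2 ∂P = σ2) (h4 : ∀ i, ∫ ω, Y i ω ^ 4 ∂P ≤ M) (N : ℕ) :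
    ∫ ω, blockSqSum Y N ω ^ 2 ∂P ≤ 4 * (M + 3 * σ2 ^ 2) * N ^ 4 := by
  have hM := nonneg_of_integral_pow_four_le h4
  have hcard : #(Ico N (2 * N)) = N := by rw [Nat.card_Ico]; omega
  have hZ4 (n : ℕ) : Integrable (fun ω => (∑ i ∈ range (n + 1), Y i ω) ^ 4) P :=
    (memLp_finsetSum (p := (4 : ℕ)) _ fun i _ => h4int i).integrable_pow_of_le le_rfl
  have hpt (ω : Ω) : blockSqSum Y N ω ^ 2 ≤
      N * ∑ n ∈ Ico N (2 * N), (∑ i ∈ range (n + 1), Y i ω) ^ 4 := by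
    refine sq_sum_le_card_mul_sum_sq.trans_eq ?_
    rw [hcard]
    simp only [← pow_mul]
  calc ∫ ω, blockSqSum Y N ω ^ 2 ∂P
      ≤ ∫ ω, N * ∑ n ∈ Ico N (2 * N), (∑ i ∈ range (n + 1), Y i ω) ^ 4 ∂P :=
        integral_mono (memLp_blockSqSum h4int N).integrable_sq
          ((integrable_finsetSum _ fun n _ => hZ4 n).const_mul _) hpt
    _ = N * ∑ n ∈ Ico N (2 * N), ∫ ω, (∑ i ∈ range (n + 1), Y i ω) ^ 4 ∂P := by
        rw [integral_const_mul, integral_finsetSum _ fun n _ => hZ4 n]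
    _ ≤ N * ∑ _n ∈ Ico N (2 * N), (2 * N : ℝ) ^ 2 * (M + 3 * σ2 ^ 2) := by
        gcongr with n hn
        refine (integral_sum_range_pow_four_le hY hind h4int h1 h2 h4 (n + 1)).trans ?_
        have : ((n + 1 : ℕ) : ℝ) ≤ 2 * N := by exact_mod_cast (mem_Ico.1 hn).2
        gcongr
    _ = 4 * (M + 3 * σ2 ^ 2) * N ^ 4 := by
        rw [sum_const, hcard, nsmul_eq_mul]; ring

lemma measureReal_blockSqSum_ge (hY : ∀ i, Measurable (Y i)) (hind : iIndepFun Y P)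
    (h4int : ∀ i, MemLp (Y i) 4 P) (h1 : ∀ i, ∫ ω, Y i ω ∂P = 0)
    (h2 : ∀ i, ∫ ω, Y i ω ^ 2 ∂P = σ2) (h4 : ∀ i, ∫ ω, Y i ω ^ 4 ∂P ≤ M) (hσ : 0 < σ2)
    {N : ℕ} (hN : 0 < N) :
    σ2 ^ 2 / (16 * (M + 3 * σ2 ^ 2)) ≤
      P.real {ω | (N : ℝ) ^ 2 * σ2 / 2 ≤ blockSqSum Y N ω} := by
  have hM := nonneg_of_integral_pow_four_le h4
  have hPZ := sq_le_integral_sq_mul_measureReal_ge (memLp_blockSqSum h4int N)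
    (r := (N : ℝ) ^ 2 * σ2 / 2) (by positivity)
    (by linarith [le_integral_blockSqSum hY hind h4int h1 h2 hσ.le N])
  have hV2 := integral_blockSqSum_sq_le hY hind h4int h1 h2 h4 N
  have hN4 : (0 : ℝ) < N ^ 4 := by positivity
  rw [div_le_iff₀ (by positivity)]
  nlinarith [measureReal_nonneg (μ := P) (s := {ω | (N : ℝ) ^ 2 * σ2 / 2 ≤ blockSqSum Y N ω})]

theorem ae_not_summable_sq_average (hY : ∀ i, Measurable (Y i)) (hind : iIndepFun Y P)
    (h4int : ∀ i, MemLp (Y i) 4 P) (h1 : ∀ i, ∫ ω, Y i ω ∂P = 0)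
    (h2 : ∀ i, ∫ ω, Y i ω ^ 2 ∂P = σ2) (h4 : ∀ i, ∫ ω, Y i ω ^ 4 ∂P ≤ M) (hσ : 0 < σ2) :
    ∀ᵐ ω ∂P, ¬ Summable fun n : ℕ => ((∑ i ∈ range (n + 1), Y i ω) / (n + 1)) ^ 2 := by
  set S := {ω | Summable fun n : ℕ => ((∑ i ∈ range (n + 1), Y i ω) / (n + 1)) ^ 2}
  set B : ℕ → Set Ω := fun N => {ω | (N : ℝ) ^ 2 * σ2 / 2 ≤ blockSqSum Y N ω}
  set δ := σ2 ^ 2 / (16 * (M + 3 * σ2 ^ 2))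
  have hδ : 0 < δ := by
    have hM := nonneg_of_integral_pow_four_le h4
    positivity
  have hB_meas (N : ℕ) : NullMeasurableSet (B N) P :=
    nullMeasurableSet_le aemeasurable_const (memLp_blockSqSum h4int N).aemeasurable
  have hB_prob : ∀ᶠ N in atTop, ENNReal.ofReal δ ≤ P (B N) := by
    filter_upwards [eventually_gt_atTop 0] with N hN
    exact ENNReal.ofReal_le_of_le_toReal
      (measureReal_blockSqSum_ge hY hind h4int h1 h2 h4 hσ hN)
  have hB_sub : limsup B atTop ⊆ Sᶜ := by
    intro ω hω hS
    have hsmall := (tendsto_sum_Ico_two_mul hS).eventually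
      (gt_mem_nhds (by positivity : 0 < σ2 / 8))
    obtain ⟨N, hBN, hN, hlt⟩ :=
      ((mem_limsup_iff_frequently_mem.1 hω).and_eventually
        (hsmall.and (eventually_gt_atTop 0))).exists
    have hBN' : σ2 / 8 ≤ blockSqSum Y N ω / (2 * N) ^ 2 := by
      rw [le_div_iff₀ (by positivity)]
      linarith [show (N : ℝ) ^ 2 * σ2 / 2 ≤ blockSqSum Y N ω from hBN]
    linarith [blockSqSum_div_le_sum_sq_average Y N ω]
  have hS_meas : MeasurableSet S := measurableSet_summable_of_nonneg
    (fun n => ((Finset.measurable_sum _ fun i _ => hY i).div_const _).pow_const 2)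
    fun _ _ => sq_nonneg _
  have hS_ne_one : P S ≠ 1 := by
    intro hS_one
    have hpos := (le_measure_limsup_atTop hB_meas hB_prob).trans (measure_mono hB_sub)
    rw [(prob_compl_eq_zero_iff hS_meas).2 hS_one, nonpos_iff_eq_zero,
      ENNReal.ofReal_eq_zero] at hpos
    linarith
  have hS_zero : P S = 0 :=
    (measure_zero_or_one_of_measurableSet_limsup_atTop (fun i => (hY i).comap_le) hind.iIndep
      (measurableSet_limsup_summable_sq_average Y)).resolve_right hS_ne_one
  exact measure_eq_zero_iff_ae_notMem.1 hS_zero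

end Moments

/-- If `X, X₁, X₂, …` are i.i.d. with `E[X⁴] < ∞`, mean `μ`, and `X` not a.s. equal to `μ`,
then for every `0 < α ≤ 2`, almost surely `∑ₙ |Sₙ/n − μ|^α = ∞`. -/
theorem stmt4 {Ω : Type*} [MeasurableSpace Ω] (P : Measure Ω) [IsProbabilityMeasure P]
    (X : ℕ → Ω → ℝ) (X0 : Ω → ℝ) (μ : ℝ)
    (hmeas : ∀ i, Measurable (X i)) (hmeas0 : Measurable X0)
    (hindep : iIndepFun X P)
    (hident : ∀ i, IdentDistrib (X i) X0 P P)
    (hL4 : Integrable (fun ω => (X0 ω) ^ 4) P)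
    (hmean : ∫ ω, X0 ω ∂P = μ)
    (hnondeg : ¬ (∀ᵐ ω ∂P, X0 ω = μ))
    (α : ℝ) (hα0 : 0 < α) (hα2 : α ≤ 2) :
    ∀ᵐ ω ∂P, ¬ Summable (fun n : ℕ =>
      |(∑ i ∈ Finset.range (n + 1), X i ω) / (n + 1) - μ| ^ α) := by
  set Y : ℕ → Ω → ℝ := fun i ω => X i ω - μ
  have hX0 : MemLp X0 4 P := by
    refine (integrable_norm_rpow_iff hmeas0.aestronglyMeasurable (by norm_num) (by norm_num)).1 ?_
    have : ENNReal.toReal 4 = ((4 : ℕ) : ℝ) := by norm_num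
    simpa [this, Real.rpow_natCast, Even.pow_abs (by decide : Even 4)] using hL4
  have hY0 : MemLp (fun ω => X0 ω - μ) 4 P := hX0.sub (memLp_const μ)
  have hYid (i : ℕ) : IdentDistrib (Y i) (fun ω => X0 ω - μ) P P :=
    (hident i).comp (measurable_id.sub_const μ)
  have hY1 (i : ℕ) : ∫ ω, Y i ω ∂P = 0 := by
    rw [(hYid i).integral_eq, integral_sub (hX0.integrable (by norm_num)) (integrable_const μ)]
    simp [hmean]
  have hσ : 0 < ∫ ω, (X0 ω - μ) ^ 2 ∂P := by
    refine (integral_nonneg fun ω => sq_nonneg _).lt_of_ne fun h => hnondeg ?_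
    filter_upwards [(integral_eq_zero_iff_of_nonneg (fun ω => sq_nonneg (X0 ω - μ))
      (hY0.mono_exponent (by norm_num)).integrable_sq).1 h.symm] with ω hω
    exact sub_eq_zero.1 (pow_eq_zero_iff two_ne_zero |>.1 hω)
  have hnot := ae_not_summable_sq_average (Y := Y) (fun i => (hmeas i).sub_const μ)
    (hindep.comp (fun _ x => x - μ) fun _ => measurable_id.sub_const μ)
    (fun i => (hYid i).memLp_iff.2 hY0) hY1
    (fun i => ((hYid i).comp (measurable_id.pow_const 2)).integral_eq)
    (fun i => ((hYid i).comp (measurable_id.pow_const 4)).integral_eq.le) hσ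
  have hcentre (n : ℕ) (ω : Ω) : (∑ i ∈ range (n + 1), X i ω) / (n + 1) - μ =
      (∑ i ∈ range (n + 1), Y i ω) / (n + 1) := by
    simp only [Y, sum_sub_distrib, sum_const, card_range, nsmul_eq_mul]
    field_simp
    push_cast
    ring
  filter_upwards [hnot] with ω hω hS
  exact hω (by simpa only [hcentre] using summable_sq_of_summable_abs_rpow hα0 hα2 hS)
end

section
/- If X, X_1, X_2, ... are i.i.d. with E[X^2] < ∞ and mean μ, then for every α > 2, almost surely ∑_{n=1}^∞ |S_n/n - μ|^α < ∞. -/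
/-!
Centre the variables, `Y i = X i - μ`. For `k² ≤ m < (k + 1)²` the average `|Y₀ + ⋯ + Y_{m-1}| / m`
is dominated by `U_k = blockBound Y k = (|Y₀ + ⋯ + Y_{k²-1}| + ∑_{k² ≤ i < (k+1)²} |Y i|) / k²`,
whose second moment is `O(1 / k²)` by independence and Cauchy–Schwarz. Hence
`E ∑ₖ k^{2/α} U_k² < ∞`, so almost surely `(k^{1/α} U_k)ₖ` is square summable, hence `α`-summable
since `α > 2`: `∑ₖ k U_k^α < ∞`. Each block contains at most `3k` indices `m`, so
`∑ₘ |S_m / m - μ|^α ≤ 3 ∑ₖ k U_k^α`.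
-/

open MeasureTheory ProbabilityTheory Finset

lemma summable_abs_rpow_of_summable_sq {ι : Type*} {a : ι → ℝ} (h : Summable fun i => a i ^ 2)
    {p : ℝ} (hp : 2 ≤ p) : Summable fun i => |a i| ^ p := by
  have hp0 : 0 < p := by linarith
  have h2 : Memℓp a 2 := (memℓp_gen_iff (by norm_num)).2 (by simpa using h)
  have hp' : Memℓp a (ENNReal.ofReal p) :=
    h2.of_exponent_ge (by simpa using ENNReal.ofReal_le_ofReal hp)
  simpa [ENNReal.toReal_ofReal hp0.le] using
    (memℓp_gen_iff (by rwa [ENNReal.toReal_ofReal hp0.le])).1 hp'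

lemma card_filter_sqrt_succ_eq_le (s : Finset ℕ) (k : ℕ) :
    #{n ∈ s | Nat.sqrt (n + 1) = k} ≤ 3 * k := by
  have hsub : {n ∈ s | Nat.sqrt (n + 1) = k} ⊆ Ico (k * k - 1) ((k + 1) * (k + 1) - 1) := by
    intro n hn
    obtain ⟨-, rfl⟩ := mem_filter.1 hn
    have := Nat.sqrt_le (n + 1)
    have : n + 1 < (Nat.sqrt (n + 1) + 1) * (Nat.sqrt (n + 1) + 1) := Nat.lt_succ_sqrt _
    exact mem_Ico.2 ⟨by omega, by omega⟩
  refine (card_le_card hsub).trans ?_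
  have : (k + 1) * (k + 1) = k * k + 2 * k + 1 := by ring
  rw [Nat.card_Ico]
  rcases k with _ | k <;> omega

lemma summable_comp_sqrt_succ {u : ℕ → ℝ} (hu : ∀ k, 0 ≤ u k)
    (h : Summable fun k : ℕ => (k : ℝ) * u k) :
    Summable fun n => u (Nat.sqrt (n + 1)) := by
  refine summable_of_sum_range_le (c := 3 * ∑' k : ℕ, (k : ℝ) * u k) (fun n => hu _) fun M => ?_
  have hmaps : ∀ n ∈ range M, Nat.sqrt (n + 1) ∈ range (M + 1) := fun n hn =>
    mem_range.2 ((Nat.sqrt_le_self _).trans_lt (by simpa using hn))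
  rw [← sum_fiberwise_of_maps_to hmaps]
  calc ∑ k ∈ range (M + 1), ∑ n ∈ range M with Nat.sqrt (n + 1) = k, u (Nat.sqrt (n + 1))
      = ∑ k ∈ range (M + 1), (#{n ∈ range M | Nat.sqrt (n + 1) = k} : ℝ) * u k := by
        refine sum_congr rfl fun k _ => ?_
        rw [sum_congr rfl fun n hn => by rw [(mem_filter.1 hn).2], sum_const, nsmul_eq_mul]
    _ ≤ ∑ k ∈ range (M + 1), 3 * ((k : ℝ) * u k) := by
        refine sum_le_sum fun k _ => ?_
        rw [← mul_assoc]
        gcongr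
        · exact hu k
        · exact_mod_cast card_filter_sqrt_succ_eq_le _ k
    _ ≤ 3 * ∑' k : ℕ, (k : ℝ) * u k := by
        rw [← mul_sum]
        gcongr
        exact h.sum_le_tsum _ fun k _ => mul_nonneg k.cast_nonneg (hu k)

lemma ae_summable_norm_of_summable_integral_norm {Ω : Type*} [MeasurableSpace Ω] {P : Measure Ω}
    {f : ℕ → Ω → ℝ} (hf : ∀ k, Integrable (f k) P)
    (h : Summable fun k => ∫ ω, ‖f k ω‖ ∂P) :
    ∀ᵐ ω ∂P, Summable fun k => ‖f k ω‖ := by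
  refine summable_norm_of_tsum_eLpNorm_ne_top le_rfl (fun k => (hf k).aestronglyMeasurable) ?_
  simp_rw [eLpNorm_one_eq_lintegral_enorm, ← ofReal_integral_norm_eq_lintegral_enorm (hf _),
    ← ENNReal.ofReal_tsum_of_nonneg (fun k => integral_nonneg fun ω => norm_nonneg _) h]
  exact ENNReal.ofReal_ne_top

noncomputable def blockBound {Ω : Type*} (Y : ℕ → Ω → ℝ) (k : ℕ) (ω : Ω) : ℝ :=
  (|∑ i ∈ range (k ^ 2), Y i ω| + ∑ i ∈ Ico (k ^ 2) ((k + 1) ^ 2), |Y i ω|) / (k : ℝ) ^ 2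

lemma blockBound_nonneg {Ω : Type*} (Y : ℕ → Ω → ℝ) (k : ℕ) (ω : Ω) : 0 ≤ blockBound Y k ω := by
  unfold blockBound
  have := sum_nonneg fun i (_ : i ∈ Ico (k ^ 2) ((k + 1) ^ 2)) => abs_nonneg (Y i ω)
  positivity

lemma abs_sum_range_div_le_blockBound {Ω : Type*} (Y : ℕ → Ω → ℝ) (ω : Ω) {m : ℕ} (hm : 0 < m) :
    |∑ i ∈ range m, Y i ω| / m ≤ blockBound Y (Nat.sqrt m) ω := by
  set k := Nat.sqrt m
  have hkm : k ^ 2 ≤ m := Nat.sqrt_le' m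
  have hmk : m ≤ (k + 1) ^ 2 := (Nat.lt_succ_sqrt' m).le
  have hk : (0 : ℝ) < (k : ℝ) ^ 2 := by
    have : 0 < k := Nat.sqrt_pos.2 hm
    positivity
  have hsum : |∑ i ∈ range m, Y i ω|
      ≤ |∑ i ∈ range (k ^ 2), Y i ω| + ∑ i ∈ Ico (k ^ 2) ((k + 1) ^ 2), |Y i ω| := by
    rw [← sum_range_add_sum_Ico _ hkm]
    refine (abs_add_le _ _).trans (add_le_add_right ((abs_sum_le_sum_abs _ _).trans ?_) _)
    exact sum_le_sum_of_subset_of_nonneg (Ico_subset_Ico_right hmk) fun i _ _ => abs_nonneg _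
  calc |∑ i ∈ range m, Y i ω| / m ≤ |∑ i ∈ range m, Y i ω| / (k : ℝ) ^ 2 := by
        gcongr
        exact_mod_cast hkm
    _ ≤ blockBound Y k ω := by
        unfold blockBound
        gcongr

section Centered

variable {Ω : Type*} [MeasurableSpace Ω] {P : Measure Ω} {Y : ℕ → Ω → ℝ}

lemma integral_sq_sum_eq_sum_integral_sq [IsFiniteMeasure P] (hY : ∀ i, MemLp (Y i) 2 P)
    (hindep : Pairwise fun i j => IndepFun (Y i) (Y j) P) (hmean : ∀ i, ∫ ω, Y i ω ∂P = 0)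
    (s : Finset ℕ) :
    ∫ ω, (∑ i ∈ s, Y i ω) ^ 2 ∂P = ∑ i ∈ s, ∫ ω, Y i ω ^ 2 ∂P := by
  have hsum_mean : ∫ ω, (∑ i ∈ s, Y i) ω ∂P = 0 := by
    simp only [Finset.sum_apply]
    rw [integral_finsetSum _ fun i _ => (hY i).integrable one_le_two]
    simp [hmean]
  have hvar := IndepFun.variance_sum (fun i _ => hY i) (s := s) fun i _ j _ hij => hindep hij
  rw [variance_of_integral_eq_zero (memLp_finsetSum' s fun i _ => hY i).aemeasurable hsum_mean]
    at hvar
  simpa [variance_of_integral_eq_zero (hY _).aemeasurable (hmean _)] using hvar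

lemma integral_add_sq_le {f g : Ω → ℝ} (hf : MemLp f 2 P) (hg : MemLp g 2 P) :
    ∫ ω, (f ω + g ω) ^ 2 ∂P ≤ 2 * ∫ ω, f ω ^ 2 ∂P + 2 * ∫ ω, g ω ^ 2 ∂P := by
  rw [← integral_const_mul, ← integral_const_mul,
    ← integral_add (hf.integrable_sq.const_mul 2) (hg.integrable_sq.const_mul 2)]
  refine integral_mono (hf.add hg).integrable_sq
    ((hf.integrable_sq.const_mul 2).add (hg.integrable_sq.const_mul 2)) fun ω => ?_
  nlinarith [sq_nonneg (f ω - g ω)]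

lemma integral_sq_sum_abs_le (hY : ∀ i, MemLp (Y i) 2 P) (s : Finset ℕ) :
    ∫ ω, (∑ i ∈ s, |Y i ω|) ^ 2 ∂P ≤ #s * ∑ i ∈ s, ∫ ω, Y i ω ^ 2 ∂P := by
  have hint : ∀ i, Integrable (fun ω => Y i ω ^ 2) P := fun i => (hY i).integrable_sq
  rw [← integral_finsetSum _ fun i _ => hint i, ← integral_const_mul]
  refine integral_mono ?_ ((integrable_finsetSum _ fun i _ => hint i).const_mul _) fun ω => ?_
  · simpa using (memLp_finsetSum s fun i _ => (hY i).abs).integrable_sq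
  · simpa only [sq_abs] using sq_sum_le_card_mul_sum_sq (s := s) (f := fun i => |Y i ω|)

lemma memLp_blockBound (hY : ∀ i, MemLp (Y i) 2 P) (k : ℕ) : MemLp (blockBound Y k) 2 P := by
  have hA := memLp_finsetSum (range (k ^ 2)) fun i _ => hY i
  have hB := memLp_finsetSum (Ico (k ^ 2) ((k + 1) ^ 2)) fun i _ => (hY i).abs
  convert (hA.abs.add hB).mul_const ((k : ℝ) ^ 2)⁻¹ using 1
  funext ω
  simp [blockBound, div_eq_mul_inv]

lemma integral_blockBound_sq_le [IsFiniteMeasure P] (hY : ∀ i, MemLp (Y i) 2 P)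
    (hindep : Pairwise fun i j => IndepFun (Y i) (Y j) P) (hmean : ∀ i, ∫ ω, Y i ω ∂P = 0)
    {σ2 : ℝ} (hvar : ∀ i, ∫ ω, Y i ω ^ 2 ∂P ≤ σ2) (k : ℕ) :
    ∫ ω, blockBound Y k ω ^ 2 ∂P ≤ 20 * σ2 / (k : ℝ) ^ 2 := by
  rcases k.eq_zero_or_pos with rfl | hk
  · simp [blockBound]
  set A := fun ω => ∑ i ∈ range (k ^ 2), Y i ω
  set B := fun ω => ∑ i ∈ Ico (k ^ 2) ((k + 1) ^ 2), |Y i ω|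
  have hσ2 : 0 ≤ σ2 := (integral_nonneg fun ω => sq_nonneg (Y 0 ω)).trans (hvar 0)
  have hA : ∫ ω, A ω ^ 2 ∂P ≤ (k : ℝ) ^ 2 * σ2 := by
    rw [integral_sq_sum_eq_sum_integral_sq hY hindep hmean]
    exact (sum_le_sum fun i _ => hvar i).trans_eq (by simp)
  have hB : ∫ ω, B ω ^ 2 ∂P ≤ (2 * k + 1) ^ 2 * σ2 := by
    have hcard : (#(Ico (k ^ 2) ((k + 1) ^ 2)) : ℝ) = 2 * k + 1 := by
      rw [Nat.card_Ico, Nat.cast_sub (Nat.pow_le_pow_left k.le_succ 2)]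
      push_cast
      ring
    refine (integral_sq_sum_abs_le hY _).trans ?_
    rw [hcard, pow_two (2 * (k : ℝ) + 1), mul_assoc]
    gcongr
    exact (sum_le_sum fun i _ => hvar i).trans_eq (by rw [sum_const, nsmul_eq_mul, hcard])
  have hAB : ∫ ω, (|A ω| + B ω) ^ 2 ∂P ≤ 2 * ∫ ω, A ω ^ 2 ∂P + 2 * ∫ ω, B ω ^ 2 ∂P := by
    have hA2 : MemLp A 2 P := memLp_finsetSum _ fun i _ => hY i
    have hB2 : MemLp B 2 P := memLp_finsetSum _ fun i _ => (hY i).abs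
    simpa only [Pi.abs_apply, sq_abs] using integral_add_sq_le hA2.abs hB2
  have hk9 : (2 * k + 1 : ℝ) ^ 2 ≤ 9 * (k : ℝ) ^ 2 := by
    have : (1 : ℝ) ≤ k := by exact_mod_cast hk
    nlinarith
  calc ∫ ω, blockBound Y k ω ^ 2 ∂P = (∫ ω, (|A ω| + B ω) ^ 2 ∂P) / ((k : ℝ) ^ 2) ^ 2 := by
        simp only [blockBound, div_pow, integral_div, A, B]
    _ ≤ (2 * ((k : ℝ) ^ 2 * σ2) + 2 * (9 * (k : ℝ) ^ 2 * σ2)) / ((k : ℝ) ^ 2) ^ 2 := by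
        gcongr
        refine hAB.trans ?_
        gcongr
        exact hB.trans (by gcongr)
    _ = 20 * σ2 / (k : ℝ) ^ 2 := by
        have : (k : ℝ) ≠ 0 := by positivity
        field_simp
        ring

lemma ae_summable_mul_blockBound_rpow [IsFiniteMeasure P] (hY : ∀ i, MemLp (Y i) 2 P)
    (hindep : Pairwise fun i j => IndepFun (Y i) (Y j) P) (hmean : ∀ i, ∫ ω, Y i ω ∂P = 0)
    {σ2 : ℝ} (hvar : ∀ i, ∫ ω, Y i ω ^ 2 ∂P ≤ σ2) {α : ℝ} (hα : 2 < α) :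
    ∀ᵐ ω ∂P, Summable fun k : ℕ => (k : ℝ) * blockBound Y k ω ^ α := by
  have hα0 : 0 < α := by linarith
  set a : ℕ → Ω → ℝ := fun k ω => (k : ℝ) ^ (1 / α) * blockBound Y k ω
  have ha_sq : ∀ k ω, a k ω ^ 2 = (k : ℝ) ^ (2 / α) * blockBound Y k ω ^ 2 := fun k ω => by
    rw [mul_pow, ← Real.rpow_mul_natCast k.cast_nonneg]
    ring_nf
  have hint : ∀ k, Integrable (fun ω => a k ω ^ 2) P := fun k => by
    simpa only [ha_sq] using (memLp_blockBound hY k).integrable_sq.const_mul _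
  have hbound : ∀ k : ℕ, ∫ ω, ‖a k ω ^ 2‖ ∂P ≤ 20 * σ2 * (k : ℝ) ^ (2 / α - 2) := fun k => by
    rcases k.eq_zero_or_pos with rfl | hk
    · have : 2 / α - 2 ≠ 0 := by
        have : 2 / α < 1 := (div_lt_one hα0).2 hα
        linarith
      simp [a, blockBound, Real.zero_rpow this]
    simp_rw [Real.norm_eq_abs, abs_sq, ha_sq, integral_const_mul]
    calc (k : ℝ) ^ (2 / α) * ∫ ω, blockBound Y k ω ^ 2 ∂P
        ≤ (k : ℝ) ^ (2 / α) * (20 * σ2 / (k : ℝ) ^ 2) := by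
          gcongr
          exact integral_blockBound_sq_le hY hindep hmean hvar k
      _ = 20 * σ2 * (k : ℝ) ^ (2 / α - 2) := by
          rw [Real.rpow_sub (by positivity), Real.rpow_two]
          ring
  have hsummable : Summable fun k : ℕ => 20 * σ2 * (k : ℝ) ^ (2 / α - 2) :=
    (Real.summable_nat_rpow.2 (by
      have : 2 / α < 1 := (div_lt_one hα0).2 hα
      linarith)).mul_left _
  filter_upwards [ae_summable_norm_of_summable_integral_norm hint
    (hsummable.of_nonneg_of_le (fun k => integral_nonneg fun ω => norm_nonneg _) hbound)] with ω hω
  refine (summable_abs_rpow_of_summable_sq hω.of_norm hα.le).congr fun k => ?_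
  rw [abs_of_nonneg (by positivity [blockBound_nonneg Y k ω]),
    Real.mul_rpow (by positivity) (blockBound_nonneg Y k ω), ← Real.rpow_mul k.cast_nonneg,
    one_div_mul_cancel hα0.ne', Real.rpow_one]

theorem ae_summable_abs_sum_range_div_rpow [IsFiniteMeasure P] (hY : ∀ i, MemLp (Y i) 2 P)
    (hindep : Pairwise fun i j => IndepFun (Y i) (Y j) P) (hmean : ∀ i, ∫ ω, Y i ω ∂P = 0)
    {σ2 : ℝ} (hvar : ∀ i, ∫ ω, Y i ω ^ 2 ∂P ≤ σ2) {α : ℝ} (hα : 2 < α) :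
    ∀ᵐ ω ∂P, Summable fun n : ℕ => |(∑ i ∈ range (n + 1), Y i ω) / (n + 1)| ^ α := by
  filter_upwards [ae_summable_mul_blockBound_rpow hY hindep hmean hvar hα] with ω hω
  refine (summable_comp_sqrt_succ (fun k => by positivity [blockBound_nonneg Y k ω]) hω)
    |>.of_nonneg_of_le (fun n => by positivity) fun n => ?_
  rw [abs_div, abs_of_pos (by positivity : (0 : ℝ) < n + 1)]
  gcongr
  exact_mod_cast abs_sum_range_div_le_blockBound Y ω n.succ_pos

end Centered

theorem stmt5_general {Ω : Type*} [MeasurableSpace Ω] (P : Measure Ω) [IsProbabilityMeasure P]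
    (X : ℕ → Ω → ℝ) (X0 : Ω → ℝ) (μ : ℝ)
    (hindep : iIndepFun X P)
    (hident : ∀ i, IdentDistrib (X i) X0 P P)
    (hL2 : Integrable (fun ω => (X0 ω) ^ 2) P)
    (hmean : ∫ ω, X0 ω ∂P = μ)
    (α : ℝ) (hα : 2 < α) :
    ∀ᵐ ω ∂P, Summable (fun n : ℕ =>
      |(∑ i ∈ Finset.range (n + 1), X i ω) / (n + 1) - μ| ^ α) := by
  have hX0 : MemLp X0 2 P :=
    (memLp_two_iff_integrable_sq (hident 0).aemeasurable_snd.aestronglyMeasurable).2 hL2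
  have hX : ∀ i, MemLp (X i) 2 P := fun i => (hident i).symm.memLp_snd hX0
  have hY : ∀ i, MemLp (fun ω => X i ω - μ) 2 P := fun i => (hX i).sub (memLp_const μ)
  have hindepY : Pairwise fun i j => IndepFun (fun ω => X i ω - μ) (fun ω => X j ω - μ) P :=
    fun i j hij => (hindep.comp (fun _ x => x - μ) fun _ => measurable_id.sub_const μ).indepFun hij
  have hmeanY : ∀ i, ∫ ω, X i ω - μ ∂P = 0 := fun i => by
    rw [integral_sub ((hX i).integrable one_le_two) (integrable_const μ), (hident i).integral_eq,
      hmean, integral_const, probReal_univ, one_smul, sub_self]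
  have hvarY : ∀ i, ∫ ω, (X i ω - μ) ^ 2 ∂P ≤ ∫ ω, (X0 ω - μ) ^ 2 ∂P := fun i =>
    ((hident i).comp ((measurable_id.sub_const μ).pow_const 2)).integral_eq.le
  filter_upwards [ae_summable_abs_sum_range_div_rpow hY hindepY hmeanY hvarY hα] with ω hω
  refine hω.congr fun n => ?_
  rw [sum_sub_distrib, sum_const, card_range, nsmul_eq_mul, sub_div]
  field_simp
  push_cast
  ring_nf

/-- If `X, X₁, X₂, …` are i.i.d. with `E[X²] < ∞` and mean `μ`, then for every `α > 2`,
almost surely `∑ₙ |Sₙ/n − μ|^α < ∞`. -/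
theorem stmt5 {Ω : Type*} [MeasurableSpace Ω] (P : Measure Ω) [IsProbabilityMeasure P]
    (X : ℕ → Ω → ℝ) (X0 : Ω → ℝ) (μ : ℝ)
    (hmeas : ∀ i, Measurable (X i)) (hmeas0 : Measurable X0)
    (hindep : iIndepFun X P)
    (hident : ∀ i, IdentDistrib (X i) X0 P P)
    (hL2 : Integrable (fun ω => (X0 ω) ^ 2) P)
    (hmean : ∫ ω, X0 ω ∂P = μ)
    (α : ℝ) (hα : 2 < α) :
    ∀ᵐ ω ∂P, Summable (fun n : ℕ =>
      |(∑ i ∈ Finset.range (n + 1), X i ω) / (n + 1) - μ| ^ α) :=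
  stmt5_general P X X0 μ hindep hident hL2 hmean α hα
end

section
/- X_n converges to X in probability if and only if for every subsequence of (X_n) and for some fixed α > 0, there exists a further subsequence (X_{n_k}) such that ∑_{k=1}^∞ |X_{n_k} − X|^α < ∞ almost surely. -/
/-!
Convergence in probability is equivalent to every subsequence having a further subsequence that
converges almost surely (`exists_seq_tendstoInMeasure_atTop_iff`). If `∑ₖ |X_{n_k} − X|^α` is
finite, its terms tend to `0`, so `X_{n_k} → X`. Conversely, convergence in probability lets us
pick `n_k` with `P {|X_{n_k} − X| ≥ 2^{-k/α}} ≤ 2^{-k}`; by Borel–Cantelli, almost surely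
`|X_{n_k} − X|^α < 2^{-k}` for all large `k`, and the series is dominated by a geometric one.
-/

open MeasureTheory Filter
open scoped ENNReal Topology

namespace MeasureTheory.TendstoInMeasure

variable {α E : Type*} [MeasurableSpace α] {μ : Measure α} [PseudoMetricSpace E]
  {f : ℕ → α → E} {g : α → E}

theorem exists_strictMono_ae_eventually_dist_lt (hfg : TendstoInMeasure μ f atTop g)
    {ε : ℕ → ℝ} (hε : ∀ k, 0 < ε k) :
    ∃ ks : ℕ → ℕ, StrictMono ks ∧
      ∀ᵐ x ∂μ, ∀ᶠ k in atTop, dist (f (ks k) x) (g x) < ε k := by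
  obtain ⟨ks, hks, hsmall⟩ := extraction_forall_of_eventually
    (P := fun k n => μ {x | ε k ≤ dist (f n x) (g x)} ≤ 2⁻¹ ^ k) fun k =>
      ((tendstoInMeasure_iff_dist.mp hfg (ε k) (hε k)).eventually_le_const
        (ENNReal.pow_pos (ENNReal.inv_pos.mpr ENNReal.ofNat_ne_top) k))
  refine ⟨ks, hks, ?_⟩
  have hsum : ∑' k, μ {x | ε k ≤ dist (f (ks k) x) (g x)} ≠ ∞ :=
    ne_top_of_le_ne_top (by simp [ENNReal.tsum_geometric]) (ENNReal.tsum_le_tsum hsmall)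
  filter_upwards [ae_eventually_notMem hsum] with x hx
  simpa only [Set.mem_ofPred_eq, not_le] using hx

theorem exists_strictMono_ae_summable_dist_rpow (hfg : TendstoInMeasure μ f atTop g)
    {p : ℝ} (hp : 0 < p) :
    ∃ ks : ℕ → ℕ, StrictMono ks ∧
      ∀ᵐ x ∂μ, Summable fun k => dist (f (ks k) x) (g x) ^ p := by
  obtain ⟨ks, hks, hae⟩ := hfg.exists_strictMono_ae_eventually_dist_lt
    (ε := fun k => ((1 / 2 : ℝ) ^ k) ^ p⁻¹) fun k => by positivity
  refine ⟨ks, hks, ?_⟩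
  filter_upwards [hae] with x hx
  refine summable_geometric_two.of_norm_bounded_eventually ?_
  rw [Nat.cofinite_eq_atTop]
  filter_upwards [hx] with k hk
  rw [Real.norm_of_nonneg (by positivity)]
  calc dist (f (ks k) x) (g x) ^ p ≤ (((1 / 2 : ℝ) ^ k) ^ p⁻¹) ^ p := by gcongr
    _ = (1 / 2) ^ k := by
      rw [← Real.rpow_mul (by positivity), inv_mul_cancel₀ hp.ne', Real.rpow_one]

end MeasureTheory.TendstoInMeasure

theorem tendsto_of_summable_dist_rpow {E : Type*} [PseudoMetricSpace E] {x : ℕ → E} {a : E}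
    {p : ℝ} (hp : 0 < p) (h : Summable fun k => dist (x k) a ^ p) :
    Tendsto x atTop (𝓝 a) := by
  have h_pow := h.tendsto_atTop_zero.rpow_const (p := p⁻¹) (Or.inr (inv_nonneg.2 hp.le))
  rw [Real.zero_rpow (inv_ne_zero hp.ne')] at h_pow
  refine tendsto_iff_dist_tendsto_zero.2 (h_pow.congr fun k => ?_)
  rw [← Real.rpow_mul dist_nonneg, mul_inv_cancel₀ hp.ne', Real.rpow_one]

theorem stmt8_general {Ω : Type*} [MeasurableSpace Ω] (P : Measure Ω) [IsProbabilityMeasure P]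
    (X : ℕ → Ω → ℝ) (X0 : Ω → ℝ)
    (hmeas : ∀ n, Measurable (X n))
    (α : ℝ) (hα : 0 < α) :
    TendstoInMeasure P X atTop X0 ↔
      ∀ ns : ℕ → ℕ, StrictMono ns → ∃ ks : ℕ → ℕ, StrictMono ks ∧
        ∀ᵐ ω ∂P, Summable (fun k : ℕ => |X (ns (ks k)) ω - X0 ω| ^ α) := by
  simp only [← Real.dist_eq]
  constructor
  · exact fun h ns hns => (h.comp hns.tendsto_atTop).exists_strictMono_ae_summable_dist_rpow hα
  · intro h
    refine (exists_seq_tendstoInMeasure_atTop_iff fun n => (hmeas n).aestronglyMeasurable).2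
      fun ns hns => ?_
    obtain ⟨ks, hks, hsum⟩ := h ns hns
    exact ⟨ks, hks, hsum.mono fun ω => tendsto_of_summable_dist_rpow hα⟩

/-- `Xₙ → X` in probability iff for every subsequence and some fixed `α > 0` there is a
further subsequence along which `∑ₖ |X_{n_k} − X|^α < ∞` almost surely. -/
theorem stmt8 {Ω : Type*} [MeasurableSpace Ω] (P : Measure Ω) [IsProbabilityMeasure P]
    (X : ℕ → Ω → ℝ) (X0 : Ω → ℝ)
    (hmeas : ∀ n, Measurable (X n)) (hmeas0 : Measurable X0)
    (α : ℝ) (hα : 0 < α) :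
    TendstoInMeasure P X atTop X0 ↔
      ∀ ns : ℕ → ℕ, StrictMono ns → ∃ ks : ℕ → ℕ, StrictMono ks ∧
        ∀ᵐ ω ∂P, Summable (fun k : ℕ => |X (ns (ks k)) ω - X0 ω| ^ α) :=
  stmt8_general P X X0 hmeas α hα
end

section
/- Let C be a real constant with distribution function F (F(x) = 0 for x < C, F(x) = 1 for x ≥ C) and F_n the distribution function of X_n. Then ∑_{n=1}^∞ |F_n(x) − F(x)| < ∞ for every x ≠ C (i.e. every continuity point of F) if and only if ∑_{n=1}^∞ P(|X_n − C| ≥ ε) < ∞ for every ε > 0. -/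
open MeasureTheory

lemma aux_le_one {Ω : Type*} [MeasurableSpace Ω] (P : Measure Ω) [IsProbabilityMeasure P]
    (s : Set Ω) : (P s).toReal ≤ 1 := by
  have h : P s ≤ 1 := prob_le_one
  have := ENNReal.toReal_mono ENNReal.one_ne_top h
  simpa using this

lemma aux_compl {Ω : Type*} [MeasurableSpace Ω] (P : Measure Ω) [IsProbabilityMeasure P]
    {s : Set Ω} (hs : MeasurableSet s) : (P sᶜ).toReal = 1 - (P s).toReal := by
  rw [measure_compl hs (measure_ne_top P s), measure_univ,
    ENNReal.toReal_sub_of_le prob_le_one ENNReal.one_ne_top, ENNReal.toReal_one]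

/-- For a constant `C` with distribution function `F` (`F x = 0` for `x < C`, `F x = 1` for
`x ≥ C`): `∑ₙ |Fₙ(x) − F(x)| < ∞` for every `x ≠ C` iff `∑ₙ P(|Xₙ − C| ≥ ε) < ∞` for
every `ε > 0`. -/
theorem stmt11 {Ω : Type*} [MeasurableSpace Ω] (P : Measure Ω) [IsProbabilityMeasure P]
    (X : ℕ → Ω → ℝ) (C : ℝ)
    (hmeas : ∀ n, Measurable (X n))
    (F : ℝ → ℝ) (hF : ∀ x, F x = if x < C then 0 else 1) :
    (∀ x : ℝ, x ≠ C →
        Summable (fun n : ℕ => |(P {ω | X n ω ≤ x}).toReal - F x|)) ↔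
      (∀ ε : ℝ, 0 < ε →
        Summable (fun n : ℕ => (P {ω | ε ≤ |X n ω - C|}).toReal)) := by
  constructor
  · intro h ε hε
    have h1 := h (C - ε) (by linarith)
    have h2 := h (C + ε / 2) (by linarith)
    rw [hF] at h1
    rw [hF] at h2
    rw [if_pos (by linarith : C - ε < C)] at h1
    rw [if_neg (by linarith : ¬ C + ε / 2 < C)] at h2
    refine Summable.of_nonneg_of_le (fun n => ENNReal.toReal_nonneg) (fun n => ?_) (h1.add h2)
    have hsub : {ω | ε ≤ |X n ω - C|} ⊆
        {ω | X n ω ≤ C - ε} ∪ {ω | X n ω ≤ C + ε / 2}ᶜ := by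
      intro ω hω
      simp only [Set.mem_setOf_eq] at hω
      rcases abs_cases (X n ω - C) with ⟨he, _⟩ | ⟨he, _⟩
      · right
        simp only [Set.mem_compl_iff, Set.mem_setOf_eq, not_le]
        rw [he] at hω; linarith
      · left
        simp only [Set.mem_setOf_eq]
        rw [he] at hω; linarith
    have hle : P {ω | ε ≤ |X n ω - C|} ≤
        P {ω | X n ω ≤ C - ε} + P ({ω | X n ω ≤ C + ε / 2}ᶜ) :=
      le_trans (measure_mono hsub) (measure_union_le _ _)
    have := ENNReal.toReal_mono
      (by finiteness) hle
    rw [ENNReal.toReal_add (measure_ne_top _ _) (measure_ne_top _ _)] at this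
    rw [aux_compl P (s := {ω | X n ω ≤ C + ε / 2}) ((hmeas n) measurableSet_Iic)] at this
    have hA : |(P {ω | X n ω ≤ C - ε}).toReal - 0| = (P {ω | X n ω ≤ C - ε}).toReal := by
      rw [sub_zero, abs_of_nonneg ENNReal.toReal_nonneg]
    have hB : |(P {ω | X n ω ≤ C + ε / 2}).toReal - 1| =
        1 - (P {ω | X n ω ≤ C + ε / 2}).toReal := by
      rw [abs_of_nonpos (by linarith [aux_le_one P {ω | X n ω ≤ C + ε / 2}])]; ring
    rw [hA, hB]
    linarith
  · intro h x hx
    rcases lt_or_gt_of_ne hx with hxC | hxC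
    · have hs := h (C - x) (by linarith)
      rw [hF, if_pos hxC]
      refine Summable.of_nonneg_of_le (fun n => abs_nonneg _) (fun n => ?_) hs
      rw [sub_zero, abs_of_nonneg ENNReal.toReal_nonneg]
      refine ENNReal.toReal_mono (measure_ne_top _ _) (measure_mono ?_)
      intro ω hω
      simp only [Set.mem_setOf_eq] at hω ⊢
      rw [abs_sub_comm, abs_of_nonneg (by linarith)]
      linarith
    · have hs := h (x - C) (by linarith)
      rw [hF, if_neg (not_lt.mpr (le_of_lt hxC))]
      refine Summable.of_nonneg_of_le (fun n => abs_nonneg _) (fun n => ?_) hs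
      have hB : |(P {ω | X n ω ≤ x}).toReal - 1| = (P ({ω | X n ω ≤ x}ᶜ)).toReal := by
        rw [aux_compl P (s := {ω | X n ω ≤ x}) ((hmeas n) measurableSet_Iic),
          abs_of_nonpos (by linarith [aux_le_one P {ω | X n ω ≤ x}])]
        ring
      rw [hB]
      refine ENNReal.toReal_mono (measure_ne_top _ _) (measure_mono ?_)
      intro ω hω
      simp only [Set.mem_compl_iff, Set.mem_setOf_eq, not_le] at hω ⊢
      rw [abs_of_nonneg (by linarith)]
      linarith
end

section
/- Suppose for every bounded Lipschitz f, ∑_{n=1}^∞ |E[f(X_n)] − E[f(X)]| < ∞, and ∑_{n=1}^∞ E[|Y_n − C|] < ∞ for a constant C. Then for every bounded Lipschitz f, ∑_{n=1}^∞ |E[f(X_n + Y_n)] − E[f(X + C)]| < ∞. -/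
open MeasureTheory

lemma integrable_comp_bdd {Ω : Type*} [MeasurableSpace Ω] (P : Measure Ω)
    [IsProbabilityMeasure P] {f : ℝ → ℝ} {K : NNReal} (hf : LipschitzWith K f)
    {M : ℝ} (hM : ∀ x, |f x| ≤ M) {Z : Ω → ℝ} (hZ : Measurable Z) :
    Integrable (fun ω => f (Z ω)) P := by
  refine Integrable.mono' (integrable_const M) ((hf.continuous.measurable.comp hZ).aestronglyMeasurable) ?_
  exact Filter.Eventually.of_forall fun ω => hM _

/-- If `Xₙ → X` in the `S₁-d` sense (summable bounded-Lipschitz discrepancies) and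
`∑ₙ E[|Yₙ − C|] < ∞`, then `Xₙ + Yₙ → X + C` in the `S₁-d` sense. -/
theorem stmt12 {Ω : Type*} [MeasurableSpace Ω] (P : Measure Ω) [IsProbabilityMeasure P]
    (X : ℕ → Ω → ℝ) (Y : ℕ → Ω → ℝ) (X0 : Ω → ℝ) (C : ℝ)
    (hmeasX : ∀ n, Measurable (X n)) (hmeasY : ∀ n, Measurable (Y n))
    (hmeas0 : Measurable X0)
    (hX : ∀ f : ℝ → ℝ, (∃ K : NNReal, LipschitzWith K f) → (∃ M : ℝ, ∀ x, |f x| ≤ M) →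
      Summable (fun n : ℕ => |(∫ ω, f (X n ω) ∂P) - ∫ ω, f (X0 ω) ∂P|))
    (hYint : ∀ n, Integrable (fun ω => |Y n ω - C|) P)
    (hY : Summable (fun n : ℕ => ∫ ω, |Y n ω - C| ∂P)) :
    ∀ f : ℝ → ℝ, (∃ K : NNReal, LipschitzWith K f) → (∃ M : ℝ, ∀ x, |f x| ≤ M) →
      Summable (fun n : ℕ =>
        |(∫ ω, f (X n ω + Y n ω) ∂P) - ∫ ω, f (X0 ω + C) ∂P|) := by
  rintro f ⟨K, hK⟩ ⟨M, hM⟩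
  -- g x = f (x + C) is Lipschitz and bounded
  have hg : LipschitzWith K (fun x => f (x + C)) := by
    intro a b
    simpa using hK (a + C) (b + C)
  have hXg := hX (fun x => f (x + C)) ⟨K, hg⟩ ⟨M, fun x => hM _⟩
  have hYK : Summable (fun n : ℕ => (K : ℝ) * ∫ ω, |Y n ω - C| ∂P) := hY.mul_left _
  have key : ∀ n, |(∫ ω, f (X n ω + Y n ω) ∂P) - ∫ ω, f (X0 ω + C) ∂P|
      ≤ (K : ℝ) * (∫ ω, |Y n ω - C| ∂P)
        + |(∫ ω, f (X n ω + C) ∂P) - ∫ ω, f (X0 ω + C) ∂P| := by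
    intro n
    have h1 : Integrable (fun ω => f (X n ω + Y n ω)) P :=
      integrable_comp_bdd P hK hM ((hmeasX n).add (hmeasY n))
    have h2 : Integrable (fun ω => f (X n ω + C)) P :=
      integrable_comp_bdd P hK hM ((hmeasX n).add_const C)
    have hstep : |(∫ ω, f (X n ω + Y n ω) ∂P) - ∫ ω, f (X n ω + C) ∂P|
        ≤ (K : ℝ) * ∫ ω, |Y n ω - C| ∂P := by
      rw [← integral_sub h1 h2]
      calc |∫ ω, (f (X n ω + Y n ω) - f (X n ω + C)) ∂P|
          ≤ ∫ ω, |f (X n ω + Y n ω) - f (X n ω + C)| ∂P := by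
            simpa [Real.norm_eq_abs] using norm_integral_le_integral_norm (μ := P) (fun ω => f (X n ω + Y n ω) - f (X n ω + C))
        _ ≤ ∫ ω, (K : ℝ) * |Y n ω - C| ∂P := by
            refine integral_mono_of_nonneg (Filter.Eventually.of_forall fun ω => abs_nonneg _)
              ((hYint n).const_mul _) (Filter.Eventually.of_forall fun ω => ?_)
            have := hK.dist_le_mul (X n ω + Y n ω) (X n ω + C)
            simpa [Real.dist_eq, abs_sub_comm] using this
        _ = (K : ℝ) * ∫ ω, |Y n ω - C| ∂P := integral_const_mul _ _
    calc |(∫ ω, f (X n ω + Y n ω) ∂P) - ∫ ω, f (X0 ω + C) ∂P|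
        ≤ |(∫ ω, f (X n ω + Y n ω) ∂P) - ∫ ω, f (X n ω + C) ∂P|
          + |(∫ ω, f (X n ω + C) ∂P) - ∫ ω, f (X0 ω + C) ∂P| := abs_sub_le _ _ _
      _ ≤ _ := by linarith
  exact (hYK.add hXg).of_nonneg_of_le (fun n => abs_nonneg _) key
end

section
/- Suppose X_n are uniformly bounded random variables, for every bounded Lipschitz f we have ∑_{n=1}^∞ |E[f(X_n)] − E[f(X)]| < ∞, and ∑_{n=1}^∞ E[|Y_n − C|] < ∞ for a constant C. Then for every bounded Lipschitz f, ∑_{n=1}^∞ |E[f(X_n Y_n)] − E[f(C X)]| < ∞. -/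
/-!
Insert `f (C Xₙ)` between `f (Xₙ Yₙ)` and `f (C X)`. Since `|Xₙ Yₙ − C Xₙ| ≤ M |Yₙ − C|`, the first
gap is at most `K M E|Yₙ − C|` for `f` `K`-Lipschitz, which is summable; the second gap is summable
by the hypothesis on `Xₙ` applied to the bounded Lipschitz function `x ↦ f (C x)`.
-/

open MeasureTheory

section LipschitzIntegral

variable {Ω α : Type*} [MeasurableSpace Ω] {μ : Measure Ω} [PseudoMetricSpace α]

lemma integrable_comp_of_bounded_continuous [IsFiniteMeasure μ] {f : α → ℝ} {B : ℝ}
    (hf : Continuous f) (hB : ∀ x, |f x| ≤ B) {U : Ω → α} (hU : AEStronglyMeasurable U μ) :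
    Integrable (fun ω => f (U ω)) μ :=
  .of_bound (hf.comp_aestronglyMeasurable hU) B (.of_forall fun ω => hB (U ω))

lemma abs_integral_comp_sub_le_of_lipschitzWith [IsFiniteMeasure μ] {f : α → ℝ} {K : NNReal}
    {B : ℝ} (hf : LipschitzWith K f) (hB : ∀ x, |f x| ≤ B) {U V : Ω → α} {W : Ω → ℝ}
    (hU : AEStronglyMeasurable U μ) (hV : AEStronglyMeasurable V μ) (hW : Integrable W μ)
    (hUV : ∀ᵐ ω ∂μ, dist (U ω) (V ω) ≤ W ω) :
    |∫ ω, f (U ω) ∂μ - ∫ ω, f (V ω) ∂μ| ≤ K * ∫ ω, W ω ∂μ := by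
  have hfU := integrable_comp_of_bounded_continuous hf.continuous hB hU
  have hfV := integrable_comp_of_bounded_continuous hf.continuous hB hV
  rw [← integral_sub hfU hfV, ← integral_const_mul]
  refine abs_integral_le_integral_abs.trans
    (integral_mono_ae (hfU.sub hfV).abs (hW.const_mul _) ?_)
  filter_upwards [hUV] with ω hω
  calc |f (U ω) - f (V ω)| = dist (f (U ω)) (f (V ω)) := (Real.dist_eq _ _).symm
    _ ≤ K * dist (U ω) (V ω) := hf.dist_le_mul _ _
    _ ≤ K * W ω := by gcongr

end LipschitzIntegral

theorem stmt13_general {Ω : Type*} [MeasurableSpace Ω] (P : Measure Ω) [IsProbabilityMeasure P]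
    (X : ℕ → Ω → ℝ) (Y : ℕ → Ω → ℝ) (X0 : Ω → ℝ) (C : ℝ)
    (hmeasX : ∀ n, Measurable (X n)) (hmeasY : ∀ n, Measurable (Y n))
    (M : ℝ) (hbdd : ∀ n, ∀ᵐ ω ∂P, |X n ω| ≤ M)
    (hX : ∀ f : ℝ → ℝ, (∃ K : NNReal, LipschitzWith K f) → (∃ B : ℝ, ∀ x, |f x| ≤ B) →
      Summable (fun n : ℕ => |(∫ ω, f (X n ω) ∂P) - ∫ ω, f (X0 ω) ∂P|))
    (hYint : ∀ n, Integrable (fun ω => |Y n ω - C|) P)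
    (hY : Summable (fun n : ℕ => ∫ ω, |Y n ω - C| ∂P)) :
    ∀ f : ℝ → ℝ, (∃ K : NNReal, LipschitzWith K f) → (∃ B : ℝ, ∀ x, |f x| ≤ B) →
      Summable (fun n : ℕ =>
        |(∫ ω, f (X n ω * Y n ω) ∂P) - ∫ ω, f (C * X0 ω) ∂P|) := by
  rintro f ⟨K, hK⟩ ⟨B, hB⟩
  have hscaled : Summable fun n => |∫ ω, f (C * X n ω) ∂P - ∫ ω, f (C * X0 ω) ∂P| :=
    hX (fun x => f (C * x)) ⟨_, hK.comp (lipschitzWith_smul C)⟩ ⟨B, fun x => hB _⟩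
  have hproduct (n : ℕ) :
      |∫ ω, f (X n ω * Y n ω) ∂P - ∫ ω, f (C * X n ω) ∂P| ≤ K * M * ∫ ω, |Y n ω - C| ∂P := by
    rw [mul_assoc, ← integral_const_mul]
    refine abs_integral_comp_sub_le_of_lipschitzWith hK hB
      ((hmeasX n).mul (hmeasY n)).aestronglyMeasurable
      (measurable_const.mul (hmeasX n)).aestronglyMeasurable ((hYint n).const_mul M) ?_
    filter_upwards [hbdd n] with ω hω
    calc dist (X n ω * Y n ω) (C * X n ω) = |X n ω| * |Y n ω - C| := by
          rw [Real.dist_eq, ← abs_mul]; ring_nf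
      _ ≤ M * |Y n ω - C| := by gcongr
  refine .of_nonneg_of_le (fun n => abs_nonneg _) (fun n => ?_) ((hY.mul_left (K * M)).add hscaled)
  exact (abs_sub_le _ _ _).trans (add_le_add_left (hproduct n) _)

/-- If the `Xₙ` are uniformly bounded, `Xₙ → X` in the `S₁-d` sense, and
`∑ₙ E[|Yₙ − C|] < ∞`, then `XₙYₙ → CX` in the `S₁-d` sense. -/
theorem stmt13 {Ω : Type*} [MeasurableSpace Ω] (P : Measure Ω) [IsProbabilityMeasure P]
    (X : ℕ → Ω → ℝ) (Y : ℕ → Ω → ℝ) (X0 : Ω → ℝ) (C : ℝ)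
    (hmeasX : ∀ n, Measurable (X n)) (hmeasY : ∀ n, Measurable (Y n))
    (hmeas0 : Measurable X0)
    (M : ℝ) (hbdd : ∀ n, ∀ᵐ ω ∂P, |X n ω| ≤ M)
    (hX : ∀ f : ℝ → ℝ, (∃ K : NNReal, LipschitzWith K f) → (∃ B : ℝ, ∀ x, |f x| ≤ B) →
      Summable (fun n : ℕ => |(∫ ω, f (X n ω) ∂P) - ∫ ω, f (X0 ω) ∂P|))
    (hYint : ∀ n, Integrable (fun ω => |Y n ω - C|) P)
    (hY : Summable (fun n : ℕ => ∫ ω, |Y n ω - C| ∂P)) :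
    ∀ f : ℝ → ℝ, (∃ K : NNReal, LipschitzWith K f) → (∃ B : ℝ, ∀ x, |f x| ≤ B) →
      Summable (fun n : ℕ =>
        |(∫ ω, f (X n ω * Y n ω) ∂P) - ∫ ω, f (C * X0 ω) ∂P|) :=
  stmt13_general P X Y X0 C hmeasX hmeasY M hbdd hX hYint hY
end

section
/- Let X be a discrete random variable such that the set {x ∈ ℝ : P(X = x) = 0} is open, and suppose ∑_{n=1}^∞ P(|X_n − X| ≥ ε) < ∞ for every ε > 0. Then for every x with P(X = x) = 0 (continuity point of the CDF F of X), ∑_{n=1}^∞ |F_n(x) − F(x)| < ∞, where F_n is the CDF of X_n. -/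
/-!
Around a continuity point `x` the openness hypothesis gives a window `(x - δ, x + δ)` containing
no atom of `X`, and since `X` lives on a countable set, `X` falls in that window with probability
zero. Off that event, `Xₙ ≤ x` and `X ≤ x` can only disagree when `|Xₙ - X| ≥ δ`, so
`|Fₙ(x) - F(x)| ≤ P(|Xₙ - X| ≥ δ)`, which is summable by complete convergence.
-/

open MeasureTheory Set
open scoped symmDiff

theorem le_iff_le_of_abs_sub_lt_of_notMem_Ioo {a b x δ : ℝ} (hab : |a - b| < δ)
    (hb : b ∉ Ioo (x - δ) (x + δ)) : a ≤ x ↔ b ≤ x := by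
  rw [abs_sub_lt_iff] at hab
  rw [mem_Ioo, not_and_or, not_lt, not_lt] at hb
  constructor <;> intro h <;> rcases hb with hb | hb <;> linarith

theorem symmDiff_setOf_le_subset {Ω : Type*} (f g : Ω → ℝ) (x δ : ℝ) :
    {ω | f ω ≤ x} ∆ {ω | g ω ≤ x} ⊆ {ω | δ ≤ |f ω - g ω|} ∪ g ⁻¹' Ioo (x - δ) (x + δ) := by
  intro ω hω
  by_contra h
  simp only [mem_union, mem_ofPred_eq, mem_preimage, not_or, not_le] at h
  rw [mem_symmDiff, mem_ofPred_eq, mem_ofPred_eq,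
    le_iff_le_of_abs_sub_lt_of_notMem_Ioo h.1 h.2] at hω
  tauto

section

variable {Ω : Type*} [MeasurableSpace Ω] {μ : Measure Ω}

theorem measure_preimage_eq_zero_of_forall_atom_eq_zero {α : Type*} {f : Ω → α} {D S : Set α}
    (hD : D.Countable) (hfD : ∀ᵐ ω ∂μ, f ω ∈ D) (hS : ∀ y ∈ S, μ {ω | f ω = y} = 0) :
    μ (f ⁻¹' S) = 0 := by
  have hatoms : ∀ᵐ ω ∂μ, ∀ y ∈ S ∩ D, f ω ≠ y :=
    (ae_ball_iff (hD.mono inter_subset_right)).2 fun y hy =>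
      measure_eq_zero_iff_ae_notMem.1 (hS y hy.1)
  rw [← compl_compl (f ⁻¹' S), ← mem_ae_iff]
  filter_upwards [hfD, hatoms] with ω hωD hω hωS
  exact hω (f ω) ⟨hωS, hωD⟩ rfl

theorem abs_measureReal_sub_le_measureReal_symmDiff_of_finite [IsFiniteMeasure μ] (s t : Set Ω) :
    |μ.real s - μ.real t| ≤ μ.real (s ∆ t) := by
  have le_add_symmDiff : ∀ s t : Set Ω, μ.real s ≤ μ.real t + μ.real (s ∆ t) := fun s t =>
    (measureReal_mono (fun ω hω => by by_cases h : ω ∈ t <;> simp_all [symmDiff_def])).trans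
      (measureReal_union_le t _)
  rw [abs_sub_le_iff]
  constructor
  · linarith [le_add_symmDiff s t]
  · rw [symmDiff_comm]
    linarith [le_add_symmDiff t s]

theorem abs_measureReal_setOf_le_sub_le [IsFiniteMeasure μ] {f g : Ω → ℝ} {x δ : ℝ} (hg : μ (g ⁻¹' Ioo (x - δ) (x + δ)) = 0) :
    |μ.real {ω | f ω ≤ x} - μ.real {ω | g ω ≤ x}| ≤ μ.real {ω | δ ≤ |f ω - g ω|} :=
  calc _ ≤ μ.real ({ω | f ω ≤ x} ∆ {ω | g ω ≤ x}) :=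
        abs_measureReal_sub_le_measureReal_symmDiff_of_finite _ _
    _ ≤ μ.real ({ω | δ ≤ |f ω - g ω|} ∪ g ⁻¹' Ioo (x - δ) (x + δ)) :=
        measureReal_mono (symmDiff_setOf_le_subset f g x δ)
    _ ≤ μ.real {ω | δ ≤ |f ω - g ω|} + μ.real (g ⁻¹' Ioo (x - δ) (x + δ)) :=
        measureReal_union_le _ _
    _ = μ.real {ω | δ ≤ |f ω - g ω|} := by rw [measureReal_def _ (g ⁻¹' _), hg]; simp

end

theorem stmt14_general {Ω : Type*} [MeasurableSpace Ω] (P : Measure Ω) [IsProbabilityMeasure P]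
    (X : ℕ → Ω → ℝ) (X0 : Ω → ℝ)
    (hmeas0 : Measurable X0)
    (hdisc : ∃ D : Set ℝ, D.Countable ∧ P {ω | X0 ω ∈ D} = 1)
    (hopen : IsOpen {x : ℝ | P {ω | X0 ω = x} = 0})
    (hcc : ∀ ε : ℝ, 0 < ε → Summable (fun n : ℕ => (P {ω | ε ≤ |X n ω - X0 ω|}).toReal)) :
    ∀ x : ℝ, P {ω | X0 ω = x} = 0 →
      Summable (fun n : ℕ =>
        |(P {ω | X n ω ≤ x}).toReal - (P {ω | X0 ω ≤ x}).toReal|) := by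
  intro x hx
  obtain ⟨D, hD, hPD⟩ := hdisc
  have hX0D : ∀ᵐ ω ∂P, X0 ω ∈ D := by
    simpa using measure_eq_zero_iff_ae_notMem.1
      ((prob_compl_eq_zero_iff (hmeas0 hD.measurableSet)).2 hPD)
  obtain ⟨δ, hδ, hball⟩ := Metric.isOpen_iff.1 hopen x hx
  rw [Real.ball_eq_Ioo] at hball
  have hwindow : P (X0 ⁻¹' Ioo (x - δ) (x + δ)) = 0 :=
    measure_preimage_eq_zero_of_forall_atom_eq_zero hD hX0D hball
  exact (hcc δ hδ).of_nonneg_of_le (fun n => abs_nonneg _)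
    fun n => abs_measureReal_setOf_le_sub_le hwindow

/-- If `X` is discrete, `{x : P(X = x) = 0}` is open, and `Xₙ → X` completely, then at every
continuity point `x` of the CDF `F` of `X`, `∑ₙ |Fₙ(x) − F(x)| < ∞`. -/
theorem stmt14 {Ω : Type*} [MeasurableSpace Ω] (P : Measure Ω) [IsProbabilityMeasure P]
    (X : ℕ → Ω → ℝ) (X0 : Ω → ℝ)
    (hmeas : ∀ n, Measurable (X n)) (hmeas0 : Measurable X0)
    (hdisc : ∃ D : Set ℝ, D.Countable ∧ P {ω | X0 ω ∈ D} = 1)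
    (hopen : IsOpen {x : ℝ | P {ω | X0 ω = x} = 0})
    (hcc : ∀ ε : ℝ, 0 < ε → Summable (fun n : ℕ => (P {ω | ε ≤ |X n ω - X0 ω|}).toReal)) :
    ∀ x : ℝ, P {ω | X0 ω = x} = 0 →
      Summable (fun n : ℕ =>
        |(P {ω | X n ω ≤ x}).toReal - (P {ω | X0 ω ≤ x}).toReal|) :=
  stmt14_general P X X0 hmeas0 hdisc hopen hcc
end

section
/- Let X have a density bounded by a constant K, and suppose there exist β > 0 and δ > 0 such that ∑_{n=1}^∞ P(n (log n)^{1+β} |X_n − X| ≥ δ) < ∞. Then for every x ∈ ℝ, ∑_{n=1}^∞ |F_n(x) − F(x)| < ∞, where F_n and F are the CDFs of X_n and X. -/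
/-!
Off the event `|Xₙ − X| ≥ ε` one has `X ≤ x − ε ⟹ Xₙ ≤ x` and `Xₙ ≤ x ⟹ X ≤ x + ε`, while a
density bounded by `K` gives `F(x + ε) − F(x) ≤ Kε` and `F(x) − F(x − ε) ≤ Kε`. Hence
`|Fₙ(x) − F(x)| ≤ P(|Xₙ − X| ≥ ε) + Kε`. With `ε = δ / (n (log n)^{1+β})` the first term is the
`n`-th term of the assumed convergent series and the second is `Kδ` times the `n`-th term of the
Bertrand series `∑ 1 / (n (log n)^{1+β})`, which converges by Cauchy condensation.
-/

open MeasureTheory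

-- The terms `n = 0, 1` are `0⁻¹ = 0`.
theorem Real.summable_inv_nat_mul_log_rpow {p : ℝ} (hp : 1 < p) :
    Summable fun n : ℕ => ((n : ℝ) * Real.log n ^ p)⁻¹ := by
  have h_nonneg : 0 ≤ᶠ[Filter.atTop] fun n : ℕ => ((n : ℝ) * Real.log n ^ p)⁻¹ :=
    .of_forall fun n => by positivity
  have h_anti : ∀ᶠ n : ℕ in Filter.atTop,
      ((n + 1 : ℕ) * Real.log (n + 1 : ℕ) ^ p : ℝ)⁻¹ ≤ ((n : ℝ) * Real.log n ^ p)⁻¹ := by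
    filter_upwards [Filter.eventually_ge_atTop 2] with n hn
    have hn' : (2 : ℝ) ≤ n := by exact_mod_cast hn
    have hlog : 0 < Real.log n := Real.log_pos (by linarith)
    have hle : (n : ℝ) ≤ (n + 1 : ℕ) := by push_cast; linarith
    gcongr
  rw [← summable_condensed_iff_of_eventually_nonneg h_nonneg h_anti]
  have hcondensed : ∀ k : ℕ, (2 : ℝ) ^ k * (((2 ^ k : ℕ) : ℝ) * Real.log (2 ^ k : ℕ) ^ p)⁻¹
      = (Real.log 2 ^ p)⁻¹ * ((k : ℝ) ^ p)⁻¹ := by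
    intro k
    rw [Nat.cast_pow, Nat.cast_ofNat, Real.log_pow, Real.mul_rpow (Nat.cast_nonneg k)
      (Real.log_nonneg one_le_two)]
    field_simp
  simp_rw [hcondensed]
  exact (Real.summable_nat_rpow_inv.2 hp).mul_left _

section

variable {Ω : Type*} [MeasurableSpace Ω] {P : Measure Ω} [IsFiniteMeasure P]

theorem measureReal_le_le_add_measureReal_abs_sub_ge (Y Z : Ω → ℝ) (x ε : ℝ) :
    P.real {ω | Y ω ≤ x} ≤
      P.real {ω | Z ω ≤ x + ε} + P.real {ω | ε ≤ |Y ω - Z ω|} := by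
  refine (measureReal_mono fun ω (hω : Y ω ≤ x) => ?_).trans (measureReal_union_le _ _)
  by_cases hfar : ε ≤ |Y ω - Z ω|
  · exact Or.inr hfar
  · exact Or.inl (show Z ω ≤ x + ε by linarith [neg_abs_le (Y ω - Z ω), not_le.1 hfar])

theorem measureReal_le_le_add_of_density_le {Z : Ω → ℝ} (hZ : Measurable Z) {f : ℝ → ℝ}
    (hdens : P.map Z = volume.withDensity fun x => ENNReal.ofReal (f x))
    {K : ℝ} (hK0 : 0 ≤ K) (hK : ∀ x, f x ≤ K) {a b : ℝ} (hab : a ≤ b) :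
    P.real {ω | Z ω ≤ b} ≤ P.real {ω | Z ω ≤ a} + K * (b - a) := by
  have hIoc : P.real (Z ⁻¹' Set.Ioc a b) ≤ K * (b - a) := by
    rw [← map_measureReal_apply hZ measurableSet_Ioc, hdens, measureReal_def]
    refine ENNReal.toReal_le_of_le_ofReal (by nlinarith) ?_
    rw [withDensity_apply _ measurableSet_Ioc]
    calc ∫⁻ x in Set.Ioc a b, ENNReal.ofReal (f x)
        ≤ ∫⁻ _ in Set.Ioc a b, ENNReal.ofReal K :=
          lintegral_mono fun x => ENNReal.ofReal_le_ofReal (hK x)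
      _ = ENNReal.ofReal (K * (b - a)) := by
        rw [setLIntegral_const, Real.volume_Ioc, ENNReal.ofReal_mul hK0]
  have hsplit : {ω | Z ω ≤ b} ⊆ {ω | Z ω ≤ a} ∪ Z ⁻¹' Set.Ioc a b :=
    fun ω (hω : Z ω ≤ b) => (le_or_gt (Z ω) a).imp id fun ha => ⟨ha, hω⟩
  linarith [measureReal_mono hsplit (μ := P),
    measureReal_union_le (μ := P) {ω | Z ω ≤ a} (Z ⁻¹' Set.Ioc a b)]

theorem abs_measureReal_le_sub_measureReal_le_le_of_density_le (Y : Ω → ℝ) {Z : Ω → ℝ}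
    (hZ : Measurable Z) {f : ℝ → ℝ}
    (hdens : P.map Z = volume.withDensity fun x => ENNReal.ofReal (f x))
    {K : ℝ} (hK0 : 0 ≤ K) (hK : ∀ x, f x ≤ K) (x : ℝ) {ε : ℝ} (hε : 0 ≤ ε) :
    |P.real {ω | Y ω ≤ x} - P.real {ω | Z ω ≤ x}| ≤
      P.real {ω | ε ≤ |Y ω - Z ω|} + K * ε := by
  have hZ_up := measureReal_le_le_add_of_density_le hZ hdens hK0 hK
    (a := x) (le_add_of_nonneg_right hε)
  have hZ_down := measureReal_le_le_add_of_density_le hZ hdens hK0 hK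
    (b := x) (sub_le_self x hε)
  have hYZ := measureReal_le_le_add_measureReal_abs_sub_ge (P := P) Y Z x ε
  have hZY := measureReal_le_le_add_measureReal_abs_sub_ge (P := P) Z Y (x - ε) ε
  simp only [sub_add_cancel, abs_sub_comm (Z _)] at hZY
  rw [abs_sub_le_iff]
  constructor <;> linarith

end

theorem stmt15_general {Ω : Type*} [MeasurableSpace Ω] (P : Measure Ω) [IsProbabilityMeasure P]
    (X : ℕ → Ω → ℝ) (X0 : Ω → ℝ)
    (hmeas0 : Measurable X0)
    (f : ℝ → ℝ) (K : ℝ)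
    (hdens : Measure.map X0 P = volume.withDensity (fun x => ENNReal.ofReal (f x)))
    (hK : ∀ x, f x ≤ K)
    (β δ : ℝ) (hβ : 0 < β) (hδ : 0 < δ)
    (h : Summable (fun n : ℕ =>
      (P {ω | δ ≤ ((n : ℝ) + 1) * (Real.log ((n : ℝ) + 1)) ^ (1 + β) *
        |X n ω - X0 ω|}).toReal)) :
    ∀ x : ℝ, Summable (fun n : ℕ =>
      |(P {ω | X n ω ≤ x}).toReal - (P {ω | X0 ω ≤ x}).toReal|) := by
  intro x
  simp only [← measureReal_def] at h ⊢
  set c : ℕ → ℝ := fun n => ((n : ℝ) + 1) * Real.log ((n : ℝ) + 1) ^ (1 + β)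
  have hc : Summable fun n => (c n)⁻¹ := by
    simpa only [Nat.cast_add, Nat.cast_one] using (summable_nat_add_iff 1).2
      (Real.summable_inv_nat_mul_log_rpow (p := 1 + β) (by linarith))
  have hKmax : ∀ y, f y ≤ max K 0 := fun y => (hK y).trans (le_max_left _ _)
  refine .of_norm_bounded_eventually_nat (h.add (hc.mul_left (max K 0 * δ))) ?_
  filter_upwards [Filter.eventually_ge_atTop 1] with n hn
  have hcn : 0 < c n := by
    have hn' : (1 : ℝ) ≤ n := by exact_mod_cast hn
    have : 0 < Real.log ((n : ℝ) + 1) := Real.log_pos (by linarith)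
    positivity
  have hevent : {ω | δ ≤ c n * |X n ω - X0 ω|} = {ω | δ / c n ≤ |X n ω - X0 ω|} := by
    simp only [div_le_iff₀' hcn]
  rw [Real.norm_eq_abs, abs_abs, hevent, mul_assoc, ← div_eq_mul_inv]
  exact abs_measureReal_le_sub_measureReal_le_le_of_density_le (X n) hmeas0 hdens
    (le_max_right K 0) hKmax x (by positivity)

/-- If `X` has a density bounded by `K` and
`∑ₙ P(n (log n)^{1+β} |Xₙ − X| ≥ δ) < ∞` for some `β, δ > 0`, then for every `x`,
`∑ₙ |Fₙ(x) − F(x)| < ∞`. -/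
theorem stmt15 {Ω : Type*} [MeasurableSpace Ω] (P : Measure Ω) [IsProbabilityMeasure P]
    (X : ℕ → Ω → ℝ) (X0 : Ω → ℝ)
    (hmeas : ∀ n, Measurable (X n)) (hmeas0 : Measurable X0)
    (f : ℝ → ℝ) (K : ℝ)
    (hdens : Measure.map X0 P = volume.withDensity (fun x => ENNReal.ofReal (f x)))
    (hK : ∀ x, f x ≤ K)
    (β δ : ℝ) (hβ : 0 < β) (hδ : 0 < δ)
    (h : Summable (fun n : ℕ =>
      (P {ω | δ ≤ ((n : ℝ) + 1) * (Real.log ((n : ℝ) + 1)) ^ (1 + β) *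
        |X n ω - X0 ω|}).toReal)) :
    ∀ x : ℝ, Summable (fun n : ℕ =>
      |(P {ω | X n ω ≤ x}).toReal - (P {ω | X0 ω ≤ x}).toReal|) :=
  stmt15_general P X X0 hmeas0 f K hdens hK β δ hβ hδ h
end

section
/- Fix α > 0. On Ω = (0,1) with Lebesgue measure, define X_n(ω) = 1 if ω ∈ (0, 1/n²) and X_n(ω) = n^{-1/α} otherwise. Then ∑_{n=1}^∞ P(|X_n| ≥ ε) < ∞ for every ε > 0 (complete convergence to 0), but for every ω ∈ (0,1), ∑_{n=1}^∞ |X_n(ω)|^α = ∞. -/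
open MeasureTheory

lemma aux_g_summable : Summable (fun n : ℕ => 1 / ((n : ℝ) + 1) ^ 2) := by
  have h : Summable (fun n : ℕ => 1 / (n : ℝ) ^ 2) :=
    Real.summable_one_div_nat_pow.mpr (by norm_num)
  have := (summable_nat_add_iff 1).mpr h
  refine this.congr fun n => ?_
  push_cast
  ring_nf

/-- On `(0,1)` with Lebesgue measure, for `Xₙ = 1` on `(0, 1/n²)` and `n^{-1/α}` elsewhere:
`Xₙ → 0` completely, but `∑ₙ |Xₙ(ω)|^α = ∞` for every `ω ∈ (0,1)`. -/
theorem stmt18 (α : ℝ) (hα : 0 < α)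
    (P : Measure ℝ) (hP : P = volume.restrict (Set.Ioo (0 : ℝ) 1))
    (X : ℕ → ℝ → ℝ)
    (hX : ∀ (n : ℕ) (ω : ℝ),
      X n ω = if ω ∈ Set.Ioo (0 : ℝ) (1 / ((n : ℝ) + 1) ^ 2) then 1
        else ((n : ℝ) + 1) ^ (-(1 / α))) :
    (∀ ε : ℝ, 0 < ε → Summable (fun n : ℕ => (P {ω | ε ≤ |X n ω|}).toReal)) ∧
    (∀ ω ∈ Set.Ioo (0 : ℝ) 1, ¬ Summable (fun n : ℕ => |X n ω| ^ α)) := by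
  constructor
  · intro ε hε
    obtain ⟨N, hN⟩ := exists_nat_gt ((1 / ε) ^ α)
    -- for n ≥ N, (n+1)^(-(1/α)) < ε
    have hsmall : ∀ n : ℕ, N ≤ n → ((n : ℝ) + 1) ^ (-(1 / α)) < ε := by
      intro n hn
      have h1 : (1 / ε) ^ α < (n : ℝ) + 1 := by
        have : (N : ℝ) ≤ (n : ℝ) := by exact_mod_cast hn
        linarith
      have h2 : ((1 / ε) ^ α) ^ (1 / α) < ((n : ℝ) + 1) ^ (1 / α) :=
        Real.rpow_lt_rpow (Real.rpow_nonneg (by positivity) _) h1 (by positivity)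
      have h3 : ((1 / ε) ^ α) ^ (1 / α) = 1 / ε := by
        rw [← Real.rpow_mul (by positivity), mul_one_div_cancel hα.ne', Real.rpow_one]
      rw [h3] at h2
      rw [Real.rpow_neg (by positivity)]
      have hpos : (0:ℝ) < ((n : ℝ) + 1) ^ (1 / α) := Real.rpow_pos_of_pos (by positivity) _
      rw [inv_lt_iff_one_lt_mul₀ hpos]
      nlinarith [mul_lt_mul_of_pos_right h2 hε, one_div_mul_cancel hε.ne']
    -- reduce to the tail
    rw [← summable_nat_add_iff N]
    have hle : ∀ n : ℕ, (P {ω | ε ≤ |X (n + N) ω|}).toReal ≤ 1 / ((n : ℝ) + 1) ^ 2 := by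
      intro n
      have hsub : {ω | ε ≤ |X (n + N) ω|} ∩ Set.Ioo (0 : ℝ) 1 ⊆
          Set.Ioo (0 : ℝ) (1 / (((n + N : ℕ) : ℝ) + 1) ^ 2) := by
        rintro ω ⟨hω1, hω2⟩
        by_contra hnot
        have hXv := hX (n + N) ω
        rw [if_neg hnot] at hXv
        have hval := hsmall (n + N) (Nat.le_add_left _ _)
        have habs : |X (n + N) ω| = (((n + N : ℕ) : ℝ) + 1) ^ (-(1/α)) := by
          rw [hXv]; exact abs_of_pos (Real.rpow_pos_of_pos (by positivity) _)
        have : ε ≤ |X (n + N) ω| := hω1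
        rw [habs] at this
        linarith
      have hmeas : P {ω | ε ≤ |X (n + N) ω|} ≤
          volume (Set.Ioo (0 : ℝ) (1 / (((n + N : ℕ) : ℝ) + 1) ^ 2)) := by
        rw [hP, Measure.restrict_apply' measurableSet_Ioo]
        exact measure_mono hsub
      have hvol : volume (Set.Ioo (0 : ℝ) (1 / (((n + N : ℕ) : ℝ) + 1) ^ 2)) =
          ENNReal.ofReal (1 / (((n + N : ℕ) : ℝ) + 1) ^ 2) := by
        rw [Real.volume_Ioo, sub_zero]
      calc (P {ω | ε ≤ |X (n + N) ω|}).toReal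
          ≤ (ENNReal.ofReal (1 / (((n + N : ℕ) : ℝ) + 1) ^ 2)).toReal := by
            apply ENNReal.toReal_mono (by simp) (hvol ▸ hmeas)
        _ = 1 / (((n + N : ℕ) : ℝ) + 1) ^ 2 := ENNReal.toReal_ofReal (by positivity)
        _ ≤ 1 / ((n : ℝ) + 1) ^ 2 := by
            apply one_div_le_one_div_of_le (by positivity)
            have : (n : ℝ) ≤ ((n + N : ℕ) : ℝ) := by push_cast; linarith [Nat.cast_nonneg (α := ℝ) N]
            nlinarith [Nat.cast_nonneg (α := ℝ) n, Nat.cast_nonneg (α := ℝ) N]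
      
    exact Summable.of_nonneg_of_le (fun n => ENNReal.toReal_nonneg) hle aux_g_summable
  · rintro ω ⟨hω0, hω1⟩ hsum
    obtain ⟨N, hN⟩ := exists_nat_gt (1 / ω)
    have hNpos : 0 < N := by
      by_contra h
      push_neg at h
      interval_cases N
      · simp at hN; nlinarith [one_div_pos.mpr hω0]
    -- for n ≥ N, the term equals ((n:ℝ)+1)⁻¹
    have htail : ∀ n : ℕ, |X (n + N) ω| ^ α = (((n + N : ℕ) : ℝ) + 1)⁻¹ := by
      intro n
      have hnot : ω ∉ Set.Ioo (0 : ℝ) (1 / (((n + N : ℕ) : ℝ) + 1) ^ 2) := by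
        intro ⟨_, h2⟩
        have hNn : (N : ℝ) ≤ ((n + N : ℕ) : ℝ) := by exact_mod_cast Nat.le_add_left N n
        have hNr : (1:ℝ) ≤ (N : ℝ) := by exact_mod_cast hNpos
        have : 1 / (((n + N : ℕ) : ℝ) + 1) ^ 2 ≤ 1 / ω := by
          rw [div_le_div_iff₀ (by positivity) hω0]
          nlinarith
        have : 1 / (((n + N : ℕ) : ℝ) + 1) ^ 2 < ω := by
          calc 1 / (((n + N : ℕ) : ℝ) + 1) ^ 2 ≤ 1 / (N : ℝ) := by
                rw [div_le_div_iff₀ (by positivity) (by positivity)]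
                nlinarith
            _ < ω := by
                rw [div_lt_iff₀ (by positivity)]
                calc (1:ℝ) = (1/ω) * ω := by field_simp
                  _ < (N:ℝ) * ω := by exact mul_lt_mul_of_pos_right hN hω0
                  _ = ω * N := mul_comm _ _
        linarith
      have hXv := hX (n + N) ω
      rw [if_neg hnot] at hXv
      have hbpos : (0:ℝ) < ((n + N : ℕ) : ℝ) + 1 := by positivity
      rw [hXv, abs_of_pos (Real.rpow_pos_of_pos hbpos _), ← Real.rpow_mul hbpos.le,
        show -(1/α)*α = -1 by field_simp, Real.rpow_neg_one]
    have h2 := (summable_nat_add_iff N).mpr hsum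
    have h3 : Summable (fun n : ℕ => (((n + N : ℕ) : ℝ) + 1)⁻¹) :=
      h2.congr htail
    have h4 : Summable (fun n : ℕ => ((n : ℝ) + ((N : ℝ) + 1))⁻¹) := by
      refine h3.congr fun n => ?_
      push_cast; ring_nf
    have h5 : Summable (fun n : ℕ => (((n + (N + 1) : ℕ)) : ℝ)⁻¹) := by
      refine h4.congr fun n => ?_
      push_cast; ring_nf
    have h6 : Summable (fun n : ℕ => ((n : ℕ) : ℝ)⁻¹) :=
      (summable_nat_add_iff (N + 1)).mp h5
    exact Real.not_summable_natCast_inv h6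
end
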